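/- arXiv:math/0606434 — 7 statements merged into one kernel-verified Lean document; each statement's English description precedes it below -/
import Mathlib

section
/- Let A ∈ L¹(ℝᵈ) and let u be a bounded continuous function on ℝᵈ. For a family 𝓕 of d_u-dimensional C¹ submanifolds of ℝᵈ that is closed under translations (i.e., F ∈ 𝓕 and x ∈ ℝᵈ imply F + x ∈ 𝓕), define ‖u‖_{L¹(𝓕)} = sup_{F∈𝓕} ∫_F |u| dμ_F, where μ_F is the induced Riemannian volume on F. Then the convolution satisfies ‖A ∗ u‖_{L¹(𝓕)} ≤ ‖A‖_{L¹} · ‖u‖_{L¹(𝓕)}. -/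
/-!
As `μ F` need not be σ-finite, Tonelli cannot swap the integrals in
`∫_F ∫ |A(y)| |u(x - y)| dy dμ_F(x)`. Pushing the finite measure `ρ = |A(y)| dy` forward along
finite-range approximations `qₙ` of the identity turns the inner integral into a finite sum
`∑_c ρ(qₙ⁻¹{c}) |u(x - c)|`, whose `μ_F`-integral is at most `ρ(ℝᵈ) ‖u‖_{L¹(𝓕)}` because `𝓕` is
translation invariant. Since `u` is bounded and continuous, these sums converge pointwise by
dominated convergence, and Fatou's lemma passes the bound to the limit.
-/

open MeasureTheory Filter Topology TopologicalSpace Set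
open scoped ENNReal NNReal

namespace MeasureTheory

variable {X α Y E : Type*} [MeasurableSpace X] [MeasurableSpace α]

lemma SimpleFunc.lintegral_comp_eq_sum (q : SimpleFunc α Y) (g : Y → ℝ≥0∞) (ρ : Measure α) :
    ∫⁻ y, g (q y) ∂ρ = ∑ c ∈ q.range, g c * ρ (q ⁻¹' {c}) := by
  rw [← SimpleFunc.map_lintegral, ← SimpleFunc.lintegral_eq_lintegral]
  rfl

lemma measurable_lintegral_comp_simpleFunc {F : X → Y → ℝ≥0∞}
    (hF : ∀ y, Measurable fun x => F x y) (q : SimpleFunc α Y) (ρ : Measure α) :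
    Measurable fun x => ∫⁻ y, F x (q y) ∂ρ := by
  simp_rw [SimpleFunc.lintegral_comp_eq_sum]
  exact Finset.measurable_sum _ fun c _ => (hF c).mul_const _

lemma lintegral_lintegral_comp_simpleFunc_le {F : X → Y → ℝ≥0∞}
    (hF : ∀ y, Measurable fun x => F x y) (q : SimpleFunc α Y) (μ : Measure X) (ρ : Measure α) :
    ∫⁻ x, ∫⁻ y, F x (q y) ∂ρ ∂μ ≤ ρ univ * ⨆ y, ∫⁻ x, F x y ∂μ := by
  simp_rw [SimpleFunc.lintegral_comp_eq_sum]
  rw [lintegral_finsetSum _ fun c _ => (hF c).mul_const _]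
  calc ∑ c ∈ q.range, ∫⁻ x, F x c * ρ (q ⁻¹' {c}) ∂μ
      = ∑ c ∈ q.range, (∫⁻ x, F x c ∂μ) * ρ (q ⁻¹' {c}) := by
        simp_rw [lintegral_mul_const _ (hF _)]
    _ ≤ ∑ c ∈ q.range, (⨆ y, ∫⁻ x, F x y ∂μ) * ρ (q ⁻¹' {c}) := by
        gcongr with c
        exact le_iSup (fun y => ∫⁻ x, F x y ∂μ) c
    _ = ρ univ * ⨆ y, ∫⁻ x, F x y ∂μ := by
        rw [← Finset.mul_sum, q.sum_range_measure_preimage_singleton, mul_comm]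

lemma ofReal_abs_integral_mul_le_lintegral_withDensity {ν : Measure α} {A g : α → ℝ}
    (hA : AEStronglyMeasurable A ν) (hg : AEMeasurable g ν) :
    ENNReal.ofReal |∫ y, A y * g y ∂ν| ≤ ∫⁻ y, ENNReal.ofReal |g y| ∂ν.withDensity (‖A ·‖ₑ) := by
  rw [lintegral_withDensity_eq_lintegral_mul₀ hA.enorm hg.abs.ennreal_ofReal,
    ← Real.enorm_eq_ofReal_abs]
  refine (enorm_integral_le_lintegral_enorm _).trans_eq (lintegral_congr fun y => ?_)
  rw [Pi.mul_apply, enorm_mul, Real.enorm_eq_ofReal_abs (g y)]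

variable [MeasurableSpace E] [PseudoEMetricSpace E] [OpensMeasurableSpace E] [SeparableSpace E]
  [Nonempty E]

theorem lintegral_lintegral_le_measure_univ_mul_iSup {F : X → E → ℝ≥0∞}
    (hFx : ∀ y, Measurable fun x => F x y) (hFy : ∀ x, Continuous (F x)) {C : ℝ≥0∞}
    (hC : C ≠ ∞) (hFC : ∀ x y, F x y ≤ C) (μ : Measure X) (ρ : Measure E) [IsFiniteMeasure ρ] :
    ∫⁻ x, ∫⁻ y, F x y ∂ρ ∂μ ≤ ρ univ * ⨆ y, ∫⁻ x, F x y ∂μ := by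
  obtain ⟨y₀⟩ := ‹Nonempty E›
  set q := SimpleFunc.approxOn id measurable_id univ y₀ (mem_univ y₀)
  have hq : ∀ x, Tendsto (fun n => ∫⁻ y, F x (q n y) ∂ρ) atTop (𝓝 (∫⁻ y, F x y ∂ρ)) :=
    fun x => tendsto_lintegral_of_dominated_convergence (fun _ => C)
      (fun n => (hFy x).measurable.comp (q n).measurable)
      (fun n => ae_of_all _ fun y => hFC _ _)
      (by rw [lintegral_const]; exact ENNReal.mul_ne_top hC (measure_ne_top ρ univ))
      (ae_of_all _ fun y => ((hFy x).tendsto y).comp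
        (SimpleFunc.tendsto_approxOn measurable_id (mem_univ y₀) (by simp)))
  calc ∫⁻ x, ∫⁻ y, F x y ∂ρ ∂μ
      = ∫⁻ x, liminf (fun n => ∫⁻ y, F x (q n y) ∂ρ) atTop ∂μ :=
        lintegral_congr fun x => (hq x).liminf_eq.symm
    _ ≤ liminf (fun n => ∫⁻ x, ∫⁻ y, F x (q n y) ∂ρ ∂μ) atTop :=
        lintegral_liminf_le fun n => measurable_lintegral_comp_simpleFunc hFx (q n) ρ
    _ ≤ ρ univ * ⨆ y, ∫⁻ x, F x y ∂μ := liminf_le_of_frequently_le'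
        (Frequently.of_forall fun n => lintegral_lintegral_comp_simpleFunc_le hFx (q n) μ ρ)

end MeasureTheory

/-- For `A ∈ L¹(ℝᵈ)` and a bounded continuous `u`, and a family `𝓕` of
submanifolds closed under translations with translation-equivariant induced volumes `μ F`,
the convolution satisfies `‖A ∗ u‖_{L¹(𝓕)} ≤ ‖A‖_{L¹} ‖u‖_{L¹(𝓕)}`. -/
theorem stmt0 {d : ℕ}
    (𝓕 : Set (Set (EuclideanSpace ℝ (Fin d))))
    (μ : Set (EuclideanSpace ℝ (Fin d)) → Measure (EuclideanSpace ℝ (Fin d)))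
    (htrans : ∀ F ∈ 𝓕, ∀ x : EuclideanSpace ℝ (Fin d), (fun y => y + x) '' F ∈ 𝓕)
    (hμtrans : ∀ F ∈ 𝓕, ∀ x : EuclideanSpace ℝ (Fin d),
      μ ((fun y => y + x) '' F) = Measure.map (fun y => y + x) (μ F))
    (A : EuclideanSpace ℝ (Fin d) → ℝ) (hA : Integrable A)
    (u : EuclideanSpace ℝ (Fin d) → ℝ) (hu : Continuous u)
    (hub : ∃ M, ∀ x, |u x| ≤ M) :
    (⨆ F ∈ 𝓕, ∫⁻ x, ENNReal.ofReal (abs (∫ y, A y * u (x - y))) ∂(μ F))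
      ≤ (∫⁻ y, (‖A y‖₊ : ℝ≥0∞)) *
        ⨆ F ∈ 𝓕, ∫⁻ x, ENNReal.ofReal (abs (u x)) ∂(μ F) := by
  obtain ⟨M, hM⟩ := hub
  set ρ := volume.withDensity fun y => ‖A y‖ₑ
  have : IsFiniteMeasure ρ := isFiniteMeasure_withDensity hA.2.ne
  have hρ : ρ univ = ∫⁻ y, (‖A y‖₊ : ℝ≥0∞) := by
    rw [withDensity_apply _ MeasurableSet.univ, Measure.restrict_univ]
    rfl
  refine iSup₂_le fun F hF => ?_
  have hshift : ∀ y, ∫⁻ x, ENNReal.ofReal |u (x - y)| ∂(μ F)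
      ≤ ⨆ F ∈ 𝓕, ∫⁻ x, ENNReal.ofReal (abs (u x)) ∂(μ F) := fun y => calc
    ∫⁻ x, ENNReal.ofReal |u (x - y)| ∂(μ F)
        = ∫⁻ x, ENNReal.ofReal |u x| ∂(μ ((fun x => x + -y) '' F)) := by
          rw [hμtrans F hF (-y), lintegral_map hu.abs.measurable.ennreal_ofReal
            (measurable_add_const _)]
          simp only [sub_eq_add_neg]
    _ ≤ _ := le_iSup₂_of_le _ (htrans F hF (-y)) le_rfl
  calc ∫⁻ x, ENNReal.ofReal |∫ y, A y * u (x - y)| ∂(μ F)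
      ≤ ∫⁻ x, ∫⁻ y, ENNReal.ofReal |u (x - y)| ∂ρ ∂(μ F) := lintegral_mono fun x =>
        ofReal_abs_integral_mul_le_lintegral_withDensity hA.1
          (hu.comp (continuous_sub_left x)).aemeasurable
    _ ≤ ρ univ * ⨆ y, ∫⁻ x, ENNReal.ofReal |u (x - y)| ∂(μ F) :=
        lintegral_lintegral_le_measure_univ_mul_iSup
          (fun y => (hu.comp (continuous_sub_right y)).abs.measurable.ennreal_ofReal)
          (fun x => ENNReal.continuous_ofReal.comp (hu.comp (continuous_sub_left x)).abs)
          ENNReal.ofReal_ne_top (fun x y => ENNReal.ofReal_le_ofReal (hM (x - y))) _ _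
    _ ≤ _ := by
        rw [hρ]
        gcongr
        exact iSup_le hshift
end

section
/- Let 𝓛 : 𝓑 → 𝓑 be a bounded linear operator on a Banach space. Then the essential spectral radius of 𝓛 equals the infimum of the spectral radii r(𝓛|_W) over all closed 𝓛-invariant subspaces W ⊆ 𝓑 of finite codimension. -/
open scoped ENNReal

variable {E : Type*} [NormedAddCommGroup E] [NormedSpace ℂ E] [CompleteSpace E]

/-- The essential spectral radius of a bounded operator, via Nussbaum's formula:
`r_ess(L) = lim_m (inf_{K compact} ‖L^m − K‖)^{1/m}`, the limit being an infimum by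
submultiplicativity. -/
noncomputable def essSpectralRadius (L : E →L[ℂ] E) : ℝ≥0∞ :=
  ⨅ m : ℕ, (⨅ K ∈ {K : E →L[ℂ] E | IsCompactOperator K},
      ENNReal.ofReal ‖L ^ (m + 1) - K‖) ^ ((1 : ℝ) / (m + 1))

/-- Restriction of a continuous linear map to a closed invariant subspace. -/
noncomputable def restrictCLM (L : E →L[ℂ] E) (W : Submodule ℂ E)
    (hW : ∀ x ∈ W, L x ∈ W) : W →L[ℂ] W where
  toLinearMap := (L : E →ₗ[ℂ] E).restrict hW
  cont := Continuous.subtype_mk (L.continuous.comp continuous_subtype_val) _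

set_option linter.unusedSectionVars false

namespace EssProof

open ContinuousLinearMap Filter Topology

/-! ### Generalities on `restrictCLM` -/

lemma restrictCLM_coe (L : E →L[ℂ] E) (W : Submodule ℂ E)
    (hW : ∀ x ∈ W, L x ∈ W) (x : W) : ((restrictCLM L W hW) x : E) = L x := rfl

lemma restrictCLM_pow_coe (L : E →L[ℂ] E) (W : Submodule ℂ E)
    (hW : ∀ x ∈ W, L x ∈ W) (n : ℕ) (x : W) :
    (((restrictCLM L W hW) ^ n) x : E) = (L ^ n) (x : E) := by
  induction n generalizing x with
  | zero => simp
  | succ n ih =>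
      rw [pow_succ, pow_succ, ContinuousLinearMap.mul_apply, ContinuousLinearMap.mul_apply,
        ih, restrictCLM_coe]

/-- An operator with range inside a finite dimensional submodule is compact. -/
lemma isCompactOperator_of_range_le (T : E →L[ℂ] E) (F : Submodule ℂ E)
    [FiniteDimensional ℂ F] (hT : ∀ x, T x ∈ F) : IsCompactOperator T := by
  refine ⟨Subtype.val '' Metric.closedBall (0 : F) ‖T‖, ?_, ?_⟩
  · exact ((isCompact_closedBall (0 : F) ‖T‖).image continuous_subtype_val)
  · filter_upwards [Metric.ball_mem_nhds (0 : E) one_pos] with x hx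
    refine ⟨⟨T x, hT x⟩, ?_, rfl⟩
    simp only [Metric.mem_closedBall, dist_zero_right]
    calc ‖(⟨T x, hT x⟩ : F)‖ = ‖T x‖ := rfl
    _ ≤ ‖T‖ * ‖x‖ := T.le_opNorm x
    _ ≤ ‖T‖ * 1 := by
        exact mul_le_mul_of_nonneg_left (le_of_lt (by simpa using hx)) (norm_nonneg T)
    _ = ‖T‖ := mul_one _

/-- A compact operator cannot be uniformly separated on a bounded sequence. -/
lemma sep_false {K : E →L[ℂ] E} (hK : IsCompactOperator K) {δ : ℝ} (hδ : 0 < δ)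
    (u : ℕ → E) (hu : ∀ n, ‖u n‖ ≤ 1)
    (hsep : ∀ m n, m ≠ n → δ ≤ ‖K (u m) - K (u n)‖) : False := by
  have hC : IsCompact (closure (K '' Metric.closedBall 0 1)) :=
    hK.isCompact_closure_image_closedBall 1
  have hTB : TotallyBounded (closure (K '' Metric.closedBall 0 1)) := hC.totallyBounded
  rw [Metric.totallyBounded_iff] at hTB
  obtain ⟨t, htf, htc⟩ := hTB (δ / 2) (by linarith)
  have hmem : ∀ n, K (u n) ∈ closure (K '' Metric.closedBall 0 1) := by
    intro n
    exact subset_closure ⟨u n, by simpa using hu n, rfl⟩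
  choose f hf using fun n => Set.mem_iUnion₂.1 (htc (hmem n))
  have : ∃ m n : ℕ, m ≠ n ∧ f m = f n := by
    haveI : Finite t := htf
    obtain ⟨m, n, hmn, h⟩ := Finite.exists_ne_map_eq_of_infinite (fun n : ℕ => (⟨f n, (hf n).1⟩ : t))
    exact ⟨m, n, hmn, by simpa using h⟩
  obtain ⟨m, n, hmn, hfmn⟩ := this
  have h1 : dist (K (u m)) (f m) < δ / 2 := (hf m).2
  have h2 : dist (K (u n)) (f n) < δ / 2 := (hf n).2
  have := hsep m n hmn
  rw [← dist_eq_norm] at this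
  have : dist (K (u m)) (K (u n)) < δ := by
    calc dist (K (u m)) (K (u n)) ≤ dist (K (u m)) (f m) + dist (f n) (K (u n)) := by
          rw [hfmn]; exact dist_triangle _ _ _
    _ < δ / 2 + δ / 2 := by rw [dist_comm (f n)]; exact add_lt_add h1 h2
    _ = δ := by ring
  linarith [hsep m n hmn, dist_eq_norm (K (u m)) (K (u n)) ▸ this]

/-- Riesz lemma inside a nested pair of subspaces. -/
lemma riesz_nested {F Y : Submodule ℂ E} (hF : IsClosed (F : Set E)) (hFY : F ≤ Y)
    (hv : ∃ v, v ∈ Y ∧ v ∉ F) :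
    ∃ u, u ∈ Y ∧ ‖u‖ = 1 ∧ ∀ w ∈ F, (1 : ℝ) / 2 ≤ ‖u - w‖ := by
  obtain ⟨v, hvY, hvF⟩ := hv
  set F' : Submodule ℂ Y := F.comap Y.subtype with hF'
  have hF'c : IsClosed (F' : Set Y) := hF.preimage continuous_subtype_val
  have hex : ∃ x : Y, x ∉ F' := ⟨⟨v, hvY⟩, by simpa [hF', Submodule.mem_comap]⟩
  obtain ⟨x₀, hx₀, hx₀d⟩ := riesz_lemma (𝕜 := ℂ) hF'c hex (r := 2/3) (by norm_num)
  have hx₀0 : x₀ ≠ 0 := by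
    intro h; exact hx₀ (h ▸ F'.zero_mem)
  have hn0 : ‖x₀‖ ≠ 0 := by simpa [norm_eq_zero] using hx₀0
  refine ⟨(‖x₀‖ : ℝ)⁻¹ • (x₀ : E), Y.smul_mem _ x₀.2, ?_, ?_⟩
  · have hc : ‖(x₀ : E)‖ = ‖x₀‖ := rfl
    rw [norm_smul, norm_inv, norm_norm, hc, inv_mul_cancel₀ hn0]
  · intro w hw
    have hw' : (⟨w, hFY hw⟩ : Y) ∈ F' := by simpa [hF', Submodule.mem_comap]
    have h1 : ‖x₀ - (‖x₀‖ • ⟨w, hFY hw⟩ : Y)‖ ≥ (2/3) * ‖x₀‖ := by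
      have : ((‖x₀‖ : ℝ) • ⟨w, hFY hw⟩ : Y) ∈ F' := F'.smul_mem _ hw'
      simpa using hx₀d _ this
    have key : ‖(‖x₀‖ : ℝ)⁻¹ • ((x₀ : E) - ‖x₀‖ • w)‖ ≥ 2/3 := by
      rw [norm_smul, norm_inv, norm_norm]
      rw [ge_iff_le, le_inv_mul_iff₀ (lt_of_le_of_ne (norm_nonneg _) (Ne.symm hn0))]
      have : ‖(x₀ : E) - ‖x₀‖ • w‖ = ‖x₀ - (‖x₀‖ • ⟨w, hFY hw⟩ : Y)‖ := rfl
      rw [this]; linarith [h1]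
    have : (‖x₀‖ : ℝ)⁻¹ • ((x₀ : E) - ‖x₀‖ • w) = (‖x₀‖ : ℝ)⁻¹ • (x₀ : E) - w := by
      rw [smul_sub, smul_smul, inv_mul_cancel₀ hn0, one_smul]
    rw [this] at key; linarith [key]

section Chain

variable {V K D : E →L[ℂ] E} {d ρM : ℝ}

/-- The fundamental "separated chain" contradiction. -/
lemma chain_false (hK : IsCompactOperator K) (hVKD : V = K + D) (hD : ‖D‖ ≤ d)
    (hρ : 0 < ρM) (h8 : 8 * d ≤ ρM) (β : ℕ → ℂ) (hβ : ∀ i, ρM ≤ ‖β i‖)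
    (W : ℕ → Submodule ℂ E) (u : ℕ → E) (hu1 : ∀ i, ‖u i‖ = 1)
    (hdist : ∀ i, ∀ w ∈ W i, (1 : ℝ) / 2 ≤ ‖u i - w‖)
    (hstruct : ∀ a b, a ≠ b →
      (V (u a) - β a • u a ∈ W a ∧ V (u b) ∈ W a) ∨
      (V (u b) - β b • u b ∈ W b ∧ V (u a) ∈ W b)) : False := by
  have hd0 : 0 ≤ d := le_trans (norm_nonneg D) hD
  have est : ∀ i j, V (u i) - β i • u i ∈ W i → V (u j) ∈ W i →
      ρM / 4 ≤ ‖K (u i) - K (u j)‖ := by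
    intro i j h1 h2
    have hβ0 : β i ≠ 0 := by
      intro h
      have := hβ i; rw [h, norm_zero] at this; linarith
    have hKx : ∀ x, K x = V x - D x := by
      intro x; rw [hVKD]; simp
    set w : E := V (u i) - β i • u i - V (u j) with hw
    have hwW : w ∈ W i := Submodule.sub_mem _ h1 h2
    have heq : K (u i) - K (u j) = (β i • u i + w) - D (u i) + D (u j) := by
      rw [hKx, hKx, hw]; abel
    have hlow : ρM / 2 ≤ ‖β i • u i + w‖ := by
      have hmem : -((β i)⁻¹ • w) ∈ W i := Submodule.neg_mem _ (Submodule.smul_mem _ _ hwW)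
      have h12 : (1:ℝ)/2 ≤ ‖u i - -((β i)⁻¹ • w)‖ := hdist i _ hmem
      have heq2 : β i • (u i - -((β i)⁻¹ • w)) = β i • u i + w := by
        rw [smul_sub, smul_neg, smul_smul, mul_inv_cancel₀ hβ0, one_smul]; abel
      calc ρM / 2 ≤ ‖β i‖ * ((1:ℝ)/2) := by
            rw [div_eq_mul_one_div ρM 2]
            exact mul_le_mul_of_nonneg_right (hβ i) (by norm_num)
      _ ≤ ‖β i‖ * ‖u i - -((β i)⁻¹ • w)‖ :=
            mul_le_mul_of_nonneg_left h12 (norm_nonneg _)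
      _ = ‖β i • (u i - -((β i)⁻¹ • w))‖ := by rw [norm_smul]
      _ = ‖β i • u i + w‖ := by rw [heq2]
    have hDu : ∀ n, ‖D (u n)‖ ≤ d := by
      intro n
      calc ‖D (u n)‖ ≤ ‖D‖ * ‖u n‖ := D.le_opNorm _
      _ ≤ d * 1 := mul_le_mul hD (le_of_eq (hu1 n)) (norm_nonneg _) hd0
      _ = d := mul_one d
    have htri : ‖β i • u i + w‖ ≤ ‖K (u i) - K (u j)‖ + ‖D (u i)‖ + ‖D (u j)‖ := by
      have hid : β i • u i + w = (K (u i) - K (u j)) + D (u i) - D (u j) := by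
        rw [hKx, hKx, hw]; abel
      rw [hid]
      calc ‖K (u i) - K (u j) + D (u i) - D (u j)‖
          ≤ ‖K (u i) - K (u j) + D (u i)‖ + ‖D (u j)‖ := norm_sub_le _ _
        _ ≤ ‖K (u i) - K (u j)‖ + ‖D (u i)‖ + ‖D (u j)‖ := by
            linarith [norm_add_le (K (u i) - K (u j)) (D (u i))]
    have h1 := hDu i
    have h2 := hDu j
    linarith
  apply sep_false hK (δ := ρM / 4) (by linarith) u (fun n => le_of_eq (hu1 n))
  intro m n hmn
  rcases hstruct m n hmn with ⟨h1, h2⟩ | ⟨h1, h2⟩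
  · exact est m n h1 h2
  · rw [norm_sub_rev]; exact est n m h1 h2

end Chain

section Conv

variable {V K D : E →L[ℂ] E} {d : ℝ}

lemma conv1 (hK : IsCompactOperator K) (hVKD : V = K + D) (hD : ‖D‖ ≤ d)
    {β : ℂ} (hβ : d < ‖β‖) {x : ℕ → E} {c : ℝ} (hc : ∀ n, ‖x n‖ ≤ c)
    (hg : CauchySeq (fun n => V (x n) - β • x n)) :
    ∃ φ : ℕ → ℕ, StrictMono φ ∧ ∃ y, Tendsto (fun n => x (φ n)) atTop (𝓝 y) := by
  have hd0 : 0 ≤ d := le_trans (norm_nonneg D) hD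
  have he : 0 < ‖β‖ - d := by linarith
  have hC : IsCompact (closure (K '' Metric.closedBall 0 c)) :=
    hK.isCompact_closure_image_closedBall c
  have hmem : ∀ n, K (x n) ∈ closure (K '' Metric.closedBall 0 c) := fun n =>
    subset_closure ⟨x n, by simpa using hc n, rfl⟩
  obtain ⟨z, _, φ, hφ, hKconv⟩ := hC.tendsto_subseq hmem
  have hKc : CauchySeq (fun n => K (x (φ n))) := hKconv.cauchySeq
  have hgc : CauchySeq (fun n => V (x (φ n)) - β • x (φ n)) :=
    hg.comp_tendsto hφ.tendsto_atTop
  have hxc : CauchySeq (fun n => x (φ n)) := by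
    rw [Metric.cauchySeq_iff]
    intro ε hε
    have hε2 : 0 < (‖β‖ - d) * ε / 2 := by positivity
    rw [Metric.cauchySeq_iff] at hKc hgc
    obtain ⟨N1, hN1⟩ := hKc _ hε2
    obtain ⟨N2, hN2⟩ := hgc _ hε2
    refine ⟨max N1 N2, fun m hm n hn => ?_⟩
    have h1 := hN1 m (le_trans (le_max_left _ _) hm) n (le_trans (le_max_left _ _) hn)
    have h2 := hN2 m (le_trans (le_max_right _ _) hm) n (le_trans (le_max_right _ _) hn)
    set a := x (φ m); set b := x (φ n)
    have key : β • (a - b) = (K a - K b) + D (a - b) -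
        ((V a - β • a) - (V b - β • b)) := by
      have hV : ∀ y, V y = K y + D y := fun y => by rw [hVKD]; simp
      rw [hV, hV]; rw [map_sub D a b]; module
    have hn1 : ‖β‖ * ‖a - b‖ ≤ ‖K a - K b‖ + d * ‖a - b‖ +
        ‖(V a - β • a) - (V b - β • b)‖ := by
      calc ‖β‖ * ‖a - b‖ = ‖β • (a - b)‖ := (norm_smul β (a-b)).symm
      _ = ‖(K a - K b) + D (a - b) - ((V a - β • a) - (V b - β • b))‖ := by rw [key]
      _ ≤ ‖(K a - K b) + D (a - b)‖ + ‖(V a - β • a) - (V b - β • b)‖ := norm_sub_le _ _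
      _ ≤ ‖K a - K b‖ + ‖D (a - b)‖ + ‖(V a - β • a) - (V b - β • b)‖ := by
          linarith [norm_add_le (K a - K b) (D (a - b))]
      _ ≤ ‖K a - K b‖ + d * ‖a - b‖ + ‖(V a - β • a) - (V b - β • b)‖ := by
          have : ‖D (a - b)‖ ≤ d * ‖a - b‖ :=
            le_trans (D.le_opNorm _) (mul_le_mul_of_nonneg_right hD (norm_nonneg _))
          linarith
    have hd1 : dist (K a) (K b) < (‖β‖ - d) * ε / 2 := h1
    have hd2 : dist (V a - β • a) (V b - β • b) < (‖β‖ - d) * ε / 2 := h2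
    rw [dist_eq_norm] at hd1 hd2 ⊢
    nlinarith [norm_nonneg (a - b)]
  obtain ⟨y, hy⟩ := cauchySeq_tendsto_of_complete hxc
  exact ⟨φ, hφ, y, hy⟩

lemma convq (hK : IsCompactOperator K) (hVKD : V = K + D) (hD : ‖D‖ ≤ d)
    {β : ℂ} (hβ : d < ‖β‖) :
    ∀ (q : ℕ) (x : ℕ → E) (c : ℝ), (∀ n, ‖x n‖ ≤ c) →
      Tendsto (fun n => ((V - β • (1 : E →L[ℂ] E)) ^ q) (x n)) atTop (𝓝 0) →
      ∃ φ : ℕ → ℕ, StrictMono φ ∧ ∃ y, Tendsto (fun n => x (φ n)) atTop (𝓝 y) := by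
  intro q
  induction q with
  | zero =>
      intro x c hc h0
      refine ⟨id, strictMono_id, 0, ?_⟩
      simpa using h0
  | succ q ih =>
      intro x c hc h0
      set w : ℕ → E := fun n => (V - β • (1 : E →L[ℂ] E)) (x n) with hw
      have hwb : ∀ n, ‖w n‖ ≤ ‖V - β • (1 : E →L[ℂ] E)‖ * c := by
        intro n
        calc ‖w n‖ ≤ ‖V - β • (1 : E →L[ℂ] E)‖ * ‖x n‖ := le_opNorm _ _
        _ ≤ _ := mul_le_mul_of_nonneg_left (hc n) (norm_nonneg _)
      have h0' : Tendsto (fun n => ((V - β • (1 : E →L[ℂ] E)) ^ q) (w n)) atTop (𝓝 0) := by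
        have : ∀ n, ((V - β • (1 : E →L[ℂ] E)) ^ q) (w n) =
            ((V - β • (1 : E →L[ℂ] E)) ^ (q + 1)) (x n) := by
          intro n
          rw [pow_succ, ContinuousLinearMap.mul_apply, hw]
        simpa only [this] using h0
      obtain ⟨φ₁, hφ₁, y, hy⟩ := ih w _ hwb h0'
      have hcauchy : CauchySeq (fun n => V (x (φ₁ n)) - β • x (φ₁ n)) := by
        have : ∀ n, V (x (φ₁ n)) - β • x (φ₁ n) = w (φ₁ n) := by
          intro n; rw [hw]; simp
        rw [funext this]
        exact hy.cauchySeq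
      obtain ⟨φ₂, hφ₂, y', hy'⟩ :=
        conv1 hK hVKD hD hβ (x := fun n => x (φ₁ n)) (fun n => hc _) hcauchy
      exact ⟨φ₁ ∘ φ₂, hφ₁.comp hφ₂, y', hy'⟩

end Conv

/-! ### Algebraic preliminaries on `z•1 - L` -/

/-- `z•1 - L`. -/
noncomputable def Bop (L : E →L[ℂ] E) (z : ℂ) : E →L[ℂ] E := z • 1 - L

/-- kernel of `(z•1-L)^j`. -/
noncomputable def Nsp (L : E →L[ℂ] E) (z : ℂ) (j : ℕ) : Submodule ℂ E :=
  LinearMap.ker (((Bop L z) ^ j : E →L[ℂ] E) : E →ₗ[ℂ] E)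

/-- range of `(z•1-L)^j`. -/
noncomputable def Rsp (L : E →L[ℂ] E) (z : ℂ) (j : ℕ) : Submodule ℂ E :=
  LinearMap.range (((Bop L z) ^ j : E →L[ℂ] E) : E →ₗ[ℂ] E)

lemma commute_smul_one (T : E →L[ℂ] E) (z : ℂ) : Commute (z • (1 : E →L[ℂ] E)) T := by
  rw [← Algebra.algebraMap_eq_smul_one]
  exact Algebra.commutes z T

lemma commute_L_Bop (L : E →L[ℂ] E) (z : ℂ) : Commute L (Bop L z) :=
  (commute_smul_one L z).symm.sub_right (Commute.refl L)

lemma commute_Bop_Bop (L : E →L[ℂ] E) (z μ : ℂ) : Commute (Bop L z) (Bop L μ) :=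
  (commute_smul_one (Bop L μ) z).sub_left (commute_L_Bop L μ)

lemma comm_mem_ker {T S : E →L[ℂ] E} (h : Commute T S) {x : E}
    (hx : x ∈ LinearMap.ker (S : E →ₗ[ℂ] E)) : T x ∈ LinearMap.ker (S : E →ₗ[ℂ] E) := by
  rw [LinearMap.mem_ker, ContinuousLinearMap.coe_coe] at hx ⊢
  have := congrArg (fun (A : E →L[ℂ] E) => A x) h
  simp only [ContinuousLinearMap.mul_apply] at this
  rw [← this, hx, map_zero]

lemma comm_mem_range {T S : E →L[ℂ] E} (h : Commute T S) {x : E}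
    (hx : x ∈ LinearMap.range (S : E →ₗ[ℂ] E)) : T x ∈ LinearMap.range (S : E →ₗ[ℂ] E) := by
  obtain ⟨y, rfl⟩ := hx
  refine ⟨T y, ?_⟩
  have := congrArg (fun (A : E →L[ℂ] E) => A y) h
  simpa only [ContinuousLinearMap.mul_apply, ContinuousLinearMap.coe_coe] using this.symm

lemma comm_mem_Nsp {T : E →L[ℂ] E} {z : ℂ} (L : E →L[ℂ] E) (h : Commute T (Bop L z)) {j : ℕ}
    {x : E} (hx : x ∈ Nsp L z j) : T x ∈ Nsp L z j :=
  comm_mem_ker (h.pow_right j) hx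

lemma comm_mem_Rsp {T : E →L[ℂ] E} {z : ℂ} (L : E →L[ℂ] E) (h : Commute T (Bop L z)) {j : ℕ}
    {x : E} (hx : x ∈ Rsp L z j) : T x ∈ Rsp L z j :=
  comm_mem_range (h.pow_right j) hx

lemma L_mem_Nsp (L : E →L[ℂ] E) {z : ℂ} {j : ℕ} {x : E} (hx : x ∈ Nsp L z j) :
    L x ∈ Nsp L z j := comm_mem_Nsp L (commute_L_Bop L z) hx

lemma L_mem_Rsp (L : E →L[ℂ] E) {z : ℂ} {j : ℕ} {x : E} (hx : x ∈ Rsp L z j) :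
    L x ∈ Rsp L z j := comm_mem_Rsp L (commute_L_Bop L z) hx

lemma Nsp_mono (L : E →L[ℂ] E) (z : ℂ) {j k : ℕ} (h : j ≤ k) : Nsp L z j ≤ Nsp L z k := by
  intro x hx
  rw [Nsp, LinearMap.mem_ker, ContinuousLinearMap.coe_coe] at hx ⊢
  obtain ⟨i, rfl⟩ := Nat.exists_eq_add_of_le h
  rw [add_comm, pow_add, ContinuousLinearMap.mul_apply, hx, map_zero]

lemma Rsp_anti (L : E →L[ℂ] E) (z : ℂ) {j k : ℕ} (h : j ≤ k) : Rsp L z k ≤ Rsp L z j := by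
  intro x hx
  obtain ⟨y, rfl⟩ := hx
  obtain ⟨i, rfl⟩ := Nat.exists_eq_add_of_le h
  refine ⟨(Bop L z ^ i) y, ?_⟩
  simp only [ContinuousLinearMap.coe_coe]
  rw [← ContinuousLinearMap.mul_apply, ← pow_add]

/-- The polynomial `g` with `g * (z•1 - L) = z^M•1 - L^M`. -/
noncomputable def gop (L : E →L[ℂ] E) (z : ℂ) (M : ℕ) : E →L[ℂ] E :=
  ∑ i ∈ Finset.range M, (z • (1 : E →L[ℂ] E)) ^ i * L ^ (M - 1 - i)

lemma gop_mul_Bop (L : E →L[ℂ] E) (z : ℂ) (M : ℕ) :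
    gop L z M * Bop L z = (z ^ M) • (1 : E →L[ℂ] E) - L ^ M := by
  have hc : Commute (z • (1 : E →L[ℂ] E)) L :=
    ((Commute.one_left L).smul_left z).symm.symm
  have := hc.geom_sum₂_mul M
  rw [gop, Bop, this, smul_pow, one_pow]

lemma commute_gop_Bop (L : E →L[ℂ] E) (z μ : ℂ) (M : ℕ) :
    Commute (gop L z M) (Bop L μ) := by
  apply Commute.sum_left
  intro i _
  exact ((commute_smul_one (Bop L μ) z).pow_left i).mul_left
    ((commute_L_Bop L μ).pow_left _)

lemma commute_Lpow_Bop (L : E →L[ℂ] E) (z : ℂ) (M : ℕ) :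
    Commute (L ^ M) (Bop L z) := (commute_L_Bop L z).pow_left M

/-- `x ∈ ker Bz^(j+1)` implies `L^M x - z^M • x ∈ ker Bz^j`. -/
lemma shift_mem_Nsp (L : E →L[ℂ] E) (z : ℂ) (M : ℕ) {j : ℕ} {x : E}
    (hx : x ∈ Nsp L z (j + 1)) :
    (L ^ M) x - (z ^ M) • x ∈ Nsp L z j := by
  have hBx : Bop L z x ∈ Nsp L z j := by
    rw [Nsp, LinearMap.mem_ker, ContinuousLinearMap.coe_coe]
    rw [Nsp, LinearMap.mem_ker, ContinuousLinearMap.coe_coe, pow_succ, ContinuousLinearMap.mul_apply] at hx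
    exact hx
  have hgx : gop L z M (Bop L z x) ∈ Nsp L z j :=
    comm_mem_Nsp L (commute_gop_Bop L z z M) hBx
  have heq : (L ^ M) x - (z ^ M) • x = -(gop L z M (Bop L z x)) := by
    have := congrArg (fun (A : E →L[ℂ] E) => A x) (gop_mul_Bop L z M)
    simp only [ContinuousLinearMap.mul_apply, ContinuousLinearMap.sub_apply,
      ContinuousLinearMap.smul_apply, ContinuousLinearMap.one_apply] at this
    rw [this]; abel
  rw [heq]
  exact Submodule.neg_mem _ hgx

/-- `x ∈ range Bz^j` implies `L^M x - z^M • x ∈ range Bz^(j+1)`. -/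
lemma shift_mem_Rsp (L : E →L[ℂ] E) (z : ℂ) (M : ℕ) {j : ℕ} {x : E}
    (hx : x ∈ Rsp L z j) :
    (L ^ M) x - (z ^ M) • x ∈ Rsp L z (j + 1) := by
  obtain ⟨y, rfl⟩ := hx
  have h1 : Bop L z ((Bop L z ^ j) y) ∈ Rsp L z (j + 1) := by
    rw [Rsp]
    exact ⟨y, by rw [ContinuousLinearMap.coe_coe, pow_succ', ContinuousLinearMap.mul_apply]⟩
  have hgx : gop L z M (Bop L z ((Bop L z ^ j) y)) ∈ Rsp L z (j + 1) :=
    comm_mem_Rsp L (commute_gop_Bop L z z M) h1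
  have heq : (L ^ M) ((Bop L z ^ j) y) - (z ^ M) • ((Bop L z ^ j) y)
      = -(gop L z M (Bop L z ((Bop L z ^ j) y))) := by
    have := congrArg (fun (A : E →L[ℂ] E) => A ((Bop L z ^ j) y)) (gop_mul_Bop L z M)
    simp only [ContinuousLinearMap.mul_apply, ContinuousLinearMap.sub_apply,
      ContinuousLinearMap.smul_apply, ContinuousLinearMap.one_apply] at this
    rw [this]; abel
  rw [ContinuousLinearMap.coe_coe, heq]
  exact Submodule.neg_mem _ hgx

/-- Kernels of powers of `z•1-L` and `μ•1-L` intersect trivially for `z ≠ μ`. -/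
lemma ker_pow_disjoint (L : E →L[ℂ] E) {z μ : ℂ} (h : z ≠ μ) (a b : ℕ) :
    Nsp L z a ⊓ Nsp L μ b = ⊥ := by
  have h1 : IsCoprime (Polynomial.X - Polynomial.C z) (Polynomial.X - Polynomial.C μ) :=
    Polynomial.isCoprime_X_sub_C_of_isUnit_sub ((sub_ne_zero_of_ne h).isUnit)
  have h1' : IsCoprime (Polynomial.C z - Polynomial.X) (Polynomial.C μ - Polynomial.X) := by
    have := h1.neg_left.neg_right
    simpa [neg_sub] using this
  obtain ⟨P, Q, hPQ⟩ := h1'.pow (m := a) (n := b)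
  rw [eq_bot_iff]
  rintro x ⟨hxz, hxμ⟩
  have haz : Polynomial.aeval L ((Polynomial.C z - Polynomial.X) ^ a) = (Bop L z) ^ a := by
    rw [map_pow, map_sub, Polynomial.aeval_X, Polynomial.aeval_C, Bop,
      Algebra.algebraMap_eq_smul_one]
  have haμ : Polynomial.aeval L ((Polynomial.C μ - Polynomial.X) ^ b) = (Bop L μ) ^ b := by
    rw [map_pow, map_sub, Polynomial.aeval_X, Polynomial.aeval_C, Bop,
      Algebra.algebraMap_eq_smul_one]
  have := congrArg (fun (A : E →L[ℂ] E) => A x) (congrArg (Polynomial.aeval L) hPQ)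
  simp only [map_add, map_mul, map_one, haz, haμ, ContinuousLinearMap.add_apply,
    ContinuousLinearMap.mul_apply, ContinuousLinearMap.one_apply] at this
  have hz0 : (Bop L z ^ a) x = 0 := hxz
  have hμ0 : (Bop L μ ^ b) x = 0 := hxμ
  rw [hz0, hμ0, map_zero, map_zero, add_zero] at this
  simpa using this.symm

/-! ### The quasi-compactness setting -/

lemma eig_pow (L : E →L[ℂ] E) {z : ℂ} {x : E} (h : L x = z • x) (M : ℕ) :
    (L ^ M) x = (z ^ M) • x := by
  induction M with
  | zero => simp
  | succ M ih =>
      rw [pow_succ, ContinuousLinearMap.mul_apply, h, map_smul, ih, smul_smul, pow_succ]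
      rw [mul_comm]

section QuasiCompact

variable {L KM : E →L[ℂ] E} {s ρ₀ : ℝ} {M : ℕ}

/-- Chain lemma specialized to the quasicompact setting. -/
lemma qc_chain (hKM : IsCompactOperator KM) (hs0 : 0 ≤ s) (hsρ : s < ρ₀)
    (hnorm : ‖L ^ M - KM‖ ≤ s ^ M) (h8 : 8 * s ^ M ≤ ρ₀ ^ M)
    (β : ℕ → ℂ) (hβ : ∀ i, ρ₀ ^ M ≤ ‖β i‖)
    (W : ℕ → Submodule ℂ E) (u : ℕ → E) (hu1 : ∀ i, ‖u i‖ = 1)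
    (hdist : ∀ i, ∀ w ∈ W i, (1 : ℝ) / 2 ≤ ‖u i - w‖)
    (hstruct : ∀ a b, a ≠ b →
      ((L ^ M) (u a) - β a • u a ∈ W a ∧ (L ^ M) (u b) ∈ W a) ∨
      ((L ^ M) (u b) - β b • u b ∈ W b ∧ (L ^ M) (u a) ∈ W b)) : False := by
  have hρ0 : 0 < ρ₀ := lt_of_le_of_lt hs0 hsρ
  exact chain_false hKM (by abel) hnorm (pow_pos hρ0 M) h8 β hβ W u hu1 hdist hstruct

/-- Convergent-subsequence lemma specialized to the quasicompact setting. -/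
lemma qc_conv (hM : 0 < M) (hKM : IsCompactOperator KM) (hs0 : 0 ≤ s) (hsρ : s < ρ₀)
    (hnorm : ‖L ^ M - KM‖ ≤ s ^ M)
    (z : ℂ) (hz : ρ₀ ≤ ‖z‖) (q : ℕ) (x : ℕ → E) (c : ℝ) (hc : ∀ n, ‖x n‖ ≤ c)
    (h0 : Tendsto (fun n => ((Bop L z) ^ q) (x n)) atTop (𝓝 0)) :
    ∃ φ : ℕ → ℕ, StrictMono φ ∧ ∃ y, Tendsto (fun n => x (φ n)) atTop (𝓝 y) := by
  have hρ0 : 0 < ρ₀ := lt_of_le_of_lt hs0 hsρ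
  have hβ : s ^ M < ‖(z ^ M : ℂ)‖ := by
    rw [norm_pow]
    calc s ^ M < ρ₀ ^ M := by
          exact pow_lt_pow_left₀ hsρ hs0 hM.ne'
    _ ≤ ‖z‖ ^ M := pow_le_pow_left₀ hρ0.le hz M
  have hfact : L ^ M - (z ^ M : ℂ) • (1 : E →L[ℂ] E) =
      (-1 : ℂ) • (gop L z M * Bop L z) := by
    rw [gop_mul_Bop]
    rw [neg_smul, one_smul, neg_sub]
  have hkey : ∀ n, ((L ^ M - (z ^ M : ℂ) • (1 : E →L[ℂ] E)) ^ q) (x n) =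
      ((-1 : ℂ) ^ q) • ((gop L z M) ^ q) (((Bop L z) ^ q) (x n)) := by
    intro n
    rw [hfact, smul_pow, (commute_gop_Bop L z z M).mul_pow,
      ContinuousLinearMap.smul_apply, ContinuousLinearMap.mul_apply]
  have h0' : Tendsto (fun n => ((L ^ M - (z ^ M : ℂ) • (1 : E →L[ℂ] E)) ^ q) (x n))
      atTop (𝓝 0) := by
    rw [tendsto_zero_iff_norm_tendsto_zero]
    apply squeeze_zero (fun n => norm_nonneg _)
      (g := fun n => ‖(gop L z M) ^ q‖ * ‖((Bop L z) ^ q) (x n)‖)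
    · intro n
      rw [hkey n, norm_smul, norm_pow, norm_neg, norm_one, one_pow, one_mul]
      exact ContinuousLinearMap.le_opNorm _ _
    · have := (tendsto_zero_iff_norm_tendsto_zero.mp h0).const_mul ‖(gop L z M) ^ q‖
      simpa using this
  exact convq hKM (by abel) hnorm hβ q x c hc h0'

/-- Finiteness of the set of "large" eigenvalues. -/
lemma qc_eigen_finite (hM : 0 < M) (hKM : IsCompactOperator KM) (hs0 : 0 ≤ s) (hsρ : s < ρ₀)
    (hnorm : ‖L ^ M - KM‖ ≤ s ^ M) (h8 : 8 * s ^ M ≤ ρ₀ ^ M) :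
    {z : ℂ | ρ₀ ≤ ‖z‖ ∧ ∃ x, x ≠ 0 ∧ L x = z • x}.Finite := by
  have hρ0 : 0 < ρ₀ := lt_of_le_of_lt hs0 hsρ
  by_contra hinf
  have hinf' : {z : ℂ | ρ₀ ≤ ‖z‖ ∧ ∃ x, x ≠ 0 ∧ L x = z • x}.Infinite := hinf
  set f := hinf'.natEmbedding with hf
  set lam : ℕ → ℂ := fun n => (f n : ℂ) with hlam
  have hlaminj : Function.Injective lam := fun a b h => f.injective (Subtype.ext h)
  have hlamρ : ∀ n, ρ₀ ≤ ‖lam n‖ := fun n => (f n).2.1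
  have hex : ∀ n, ∃ x, x ≠ 0 ∧ L x = lam n • x := fun n => (f n).2.2
  choose x hx0 hxe using hex
  have hind : LinearIndependent ℂ x := by
    apply Module.End.eigenvectors_linearIndependent' (L : Module.End ℂ E) lam hlaminj
    intro i
    refine ⟨?_, hx0 i⟩
    rw [Module.End.mem_eigenspace_iff]
    exact hxe i
  set Y : ℕ → Submodule ℂ E := fun n => Submodule.span ℂ (x '' Set.Iio n) with hY
  have hYmono : ∀ {m n : ℕ}, m ≤ n → Y m ≤ Y n := fun h =>
    Submodule.span_mono (Set.image_mono (fun t ht => lt_of_lt_of_le ht h))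
  have hYfin : ∀ n, FiniteDimensional ℂ (Y n) := fun n =>
    FiniteDimensional.span_of_finite ℂ ((Set.finite_Iio n).image x)
  have hYclosed : ∀ n, IsClosed ((Y n : Set E)) := fun n =>
    haveI := hYfin n
    Submodule.closed_of_finiteDimensional _
  have hxmem : ∀ n, x n ∈ Y (n + 1) :=
    fun n => Submodule.subset_span ⟨n, Nat.lt_succ_self n, rfl⟩
  have hxnot : ∀ n, x n ∉ Y n := fun n =>
    hind.notMem_span_image (by simp)
  have hVY : ∀ n, ∀ y ∈ Y n, (L ^ M) y ∈ Y n := by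
    intro n y hy
    induction hy using Submodule.span_induction with
    | mem w hw =>
        obtain ⟨i, hi, rfl⟩ := hw
        rw [eig_pow L (hxe i)]
        exact Submodule.smul_mem _ _ (Submodule.subset_span ⟨i, hi, rfl⟩)
    | zero => simp
    | add a b _ _ ha hb => rw [map_add]; exact Submodule.add_mem _ ha hb
    | smul a w _ hw => rw [map_smul]; exact Submodule.smul_mem _ _ hw
  have hshift : ∀ n, ∀ y ∈ Y (n + 1), (L ^ M) y - (lam n ^ M) • y ∈ Y n := by
    intro n y hy
    induction hy using Submodule.span_induction with
    | mem w hw =>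
        obtain ⟨i, hi, rfl⟩ := hw
        rw [eig_pow L (hxe i), ← sub_smul]
        rcases Nat.lt_succ_iff_lt_or_eq.mp hi with hi' | rfl
        · exact Submodule.smul_mem _ _ (Submodule.subset_span ⟨i, hi', rfl⟩)
        · simp
    | zero => simp
    | add a b _ _ ha hb =>
        have : (L ^ M) (a + b) - (lam n ^ M) • (a + b) =
            ((L ^ M) a - (lam n ^ M) • a) + ((L ^ M) b - (lam n ^ M) • b) := by
          rw [map_add]; module
        rw [this]; exact Submodule.add_mem _ ha hb
    | smul a w _ hw =>
        have : (L ^ M) (a • w) - (lam n ^ M) • (a • w) =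
            a • ((L ^ M) w - (lam n ^ M) • w) := by
          rw [map_smul]; module
        rw [this]; exact Submodule.smul_mem _ _ hw
  have hries : ∀ n, ∃ u, u ∈ Y (n + 1) ∧ ‖u‖ = 1 ∧ ∀ w ∈ Y n, (1 : ℝ) / 2 ≤ ‖u - w‖ :=
    fun n => riesz_nested (hYclosed n) (hYmono (Nat.le_succ n))
      ⟨x n, hxmem n, hxnot n⟩
  choose u humem hunorm hudist using hries
  apply qc_chain hKM hs0 hsρ hnorm h8 (fun n => lam n ^ M) ?_ Y u hunorm hudist ?_
  · intro i
    rw [norm_pow]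
    exact pow_le_pow_left₀ hρ0.le (hlamρ i) M
  · intro a b hab
    rcases Ne.lt_or_gt hab with h | h
    · right
      exact ⟨hshift b _ (humem b),
        hYmono (Nat.succ_le_of_lt h) (hVY (a + 1) _ (humem a))⟩
    · left
      exact ⟨hshift a _ (humem a),
        hYmono (Nat.succ_le_of_lt h) (hVY (b + 1) _ (humem b))⟩

variable {L KM : E →L[ℂ] E} {s ρ₀ : ℝ} {M : ℕ}

/-- Finite-dimensionality of kernels of powers. -/
lemma qc_kerFD (hM : 0 < M) (hKM : IsCompactOperator KM) (hs0 : 0 ≤ s) (hsρ : s < ρ₀)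
    (hnorm : ‖L ^ M - KM‖ ≤ s ^ M) (h8 : 8 * s ^ M ≤ ρ₀ ^ M)
    (z : ℂ) (hz : ρ₀ ≤ ‖z‖) : ∀ j, FiniteDimensional ℂ (Nsp L z j) := by
  have hρ0 : 0 < ρ₀ := lt_of_le_of_lt hs0 hsρ
  intro j
  induction j with
  | zero =>
      have h0 : Nsp L z 0 = ⊥ := by
        rw [Nsp, pow_zero]
        ext x
        simp [LinearMap.mem_ker]
      rw [h0]
      infer_instance
  | succ j ih =>
      by_contra hnFD
      haveI := ih
      obtain ⟨π, hπ⟩ := Submodule.ClosedComplemented.of_finiteDimensional (Nsp L z j)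
      set Z : Submodule ℂ E := Nsp L z (j+1) ⊓ LinearMap.ker (π : E →ₗ[ℂ] Nsp L z j) with hZdef
      have hZle : Z ≤ Nsp L z (j+1) := inf_le_left
      have hsub : Nsp L z (j+1) ≤ Nsp L z j ⊔ Z := by
        intro w hw
        have h1 : (π w : E) ∈ Nsp L z j := (π w).2
        have h2 : w - ↑(π w) ∈ LinearMap.ker (π : E →ₗ[ℂ] Nsp L z j) := by
          rw [LinearMap.mem_ker, ContinuousLinearMap.coe_coe, map_sub, hπ (π w), sub_self]
        have h3 : w - ↑(π w) ∈ Nsp L z (j+1) :=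
          Submodule.sub_mem _ hw (Nsp_mono L z (Nat.le_succ j) h1)
        have hsplit : w = ↑(π w) + (w - ↑(π w)) := by abel
        rw [hsplit]
        exact Submodule.add_mem _ (Submodule.mem_sup_left h1)
          (Submodule.mem_sup_right ⟨h3, h2⟩)
      have hZnFD : ¬ FiniteDimensional ℂ Z := by
        intro hZFD
        haveI := hZFD
        haveI := Submodule.finiteDimensional_sup (Nsp L z j) Z
        exact hnFD (Submodule.finiteDimensional_of_le hsub)
      have hdisj : ∀ w, w ∈ Nsp L z j → w ∈ Z → w = 0 := by
        intro w hw1 hw2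
        have hwk : π w = 0 := hw2.2
        have := hπ ⟨w, hw1⟩
        rw [show ((⟨w, hw1⟩ : Nsp L z j) : E) = w from rfl, hwk] at this
        simpa using congrArg Subtype.val this.symm
      -- an infinite independent family in Z
      haveI : Infinite (Module.Basis.ofVectorSpaceIndex ℂ Z) := by
        by_contra hfin
        haveI : Finite (Module.Basis.ofVectorSpaceIndex ℂ Z) := not_infinite_iff_finite.mp hfin
        exact hZnFD (Module.Finite.of_basis (Module.Basis.ofVectorSpace ℂ Z))
      set em := Infinite.natEmbedding (Module.Basis.ofVectorSpaceIndex ℂ Z) with hem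
      set b := Module.Basis.ofVectorSpace ℂ Z with hb
      set v : ℕ → E := fun n => ((b (em n) : Z) : E) with hv
      have hvZ : ∀ n, v n ∈ Z := fun n => (b (em n) : Z).2
      have hvind : LinearIndependent ℂ v := by
        have h1 : LinearIndependent ℂ (fun n => b (em n)) :=
          b.linearIndependent.comp em em.injective
        exact h1.map' Z.subtype (Submodule.ker_subtype Z)
      set W : ℕ → Submodule ℂ E :=
        fun n => Nsp L z j ⊔ Submodule.span ℂ (v '' Set.Iio n) with hW
      have hWfin : ∀ n, FiniteDimensional ℂ (W n) := by
        intro n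
        haveI := FiniteDimensional.span_of_finite ℂ ((Set.finite_Iio n).image v)
        exact Submodule.finiteDimensional_sup _ _
      have hWclosed : ∀ n, IsClosed (W n : Set E) := fun n =>
        haveI := hWfin n
        Submodule.closed_of_finiteDimensional _
      have hWmono : ∀ {m n : ℕ}, m ≤ n → W m ≤ W n := fun h =>
        sup_le_sup_left (Submodule.span_mono
          (Set.image_mono (fun t ht => lt_of_lt_of_le ht h))) _
      have hWsub : ∀ n, W n ≤ Nsp L z (j+1) := by
        intro n
        apply sup_le (Nsp_mono L z (Nat.le_succ j))
        rw [Submodule.span_le]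
        rintro _ ⟨i, _, rfl⟩
        exact hZle (hvZ i)
      have hvnot : ∀ n, v n ∉ W n := by
        intro n hmem
        obtain ⟨m, hm, w, hw, hsum⟩ := Submodule.mem_sup.mp hmem
        have hwZ : w ∈ Z := by
          have : Submodule.span ℂ (v '' Set.Iio n) ≤ Z := by
            rw [Submodule.span_le]
            rintro _ ⟨i, _, rfl⟩
            exact hvZ i
          exact this hw
        have hmz : m ∈ Z := by
          have : m = v n - w := by rw [← hsum]; abel
          rw [this]
          exact Submodule.sub_mem _ (hvZ n) hwZ
        have : m = 0 := hdisj m hm hmz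
        rw [this, zero_add] at hsum
        exact hvind.notMem_span_image (s := Set.Iio n) (by simp) (hsum ▸ hw)
      have hvmem : ∀ n, v n ∈ W (n+1) :=
        fun n => Submodule.mem_sup_right
          (Submodule.subset_span ⟨n, Nat.lt_succ_self n, rfl⟩)
      have hries := fun n => riesz_nested (hWclosed n) (hWmono (Nat.le_succ n))
        ⟨v n, hvmem n, hvnot n⟩
      choose u humem hunorm hudist using hries
      have hushift : ∀ n, (L ^ M) (u n) - (z ^ M) • (u n) ∈ Nsp L z j := fun n =>
        shift_mem_Nsp L z M (hWsub (n+1) (humem n))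
      have huV : ∀ {m n : ℕ}, m + 1 ≤ n → (L ^ M) (u m) ∈ W n := by
        intro m n hmn
        have hsplit : (L ^ M) (u m) =
            (z ^ M) • (u m) + ((L ^ M) (u m) - (z ^ M) • (u m)) := by abel
        rw [hsplit]
        exact Submodule.add_mem _
          (hWmono hmn (Submodule.smul_mem _ _ (humem m)))
          (le_sup_left (a := Nsp L z j) (hushift m))
      apply qc_chain hKM hs0 hsρ hnorm h8 (fun _ => z ^ M) ?_ W u hunorm hudist ?_
      · intro i
        rw [norm_pow]
        exact pow_le_pow_left₀ hρ0.le hz M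
      · intro a c hac
        rcases Ne.lt_or_gt hac with h | h
        · right
          exact ⟨le_sup_left (a := Nsp L z j) (hushift c), huV (Nat.succ_le_of_lt h)⟩
        · left
          exact ⟨le_sup_left (a := Nsp L z j) (hushift a), huV (Nat.succ_le_of_lt h)⟩

/-- Stabilization of the kernel chain. -/
lemma qc_ker_stab (hM : 0 < M) (hKM : IsCompactOperator KM) (hs0 : 0 ≤ s) (hsρ : s < ρ₀)
    (hnorm : ‖L ^ M - KM‖ ≤ s ^ M) (h8 : 8 * s ^ M ≤ ρ₀ ^ M)
    (z : ℂ) (hz : ρ₀ ≤ ‖z‖) :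
    ∃ p, 0 < p ∧ ∀ q, p ≤ q → Nsp L z q = Nsp L z p := by
  have hρ0 : 0 < ρ₀ := lt_of_le_of_lt hs0 hsρ
  have hstep : ∀ j, Nsp L z j = Nsp L z (j+1) → Nsp L z (j+1) = Nsp L z (j+2) := by
    intro j hj
    refine le_antisymm (Nsp_mono L z (Nat.le_succ _)) ?_
    intro w hw
    have h1 : Bop L z w ∈ Nsp L z (j+1) := by
      rw [Nsp, LinearMap.mem_ker, ContinuousLinearMap.coe_coe, ← ContinuousLinearMap.mul_apply, ← pow_succ]
      exact hw
    rw [← hj] at h1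
    rw [Nsp, LinearMap.mem_ker, ContinuousLinearMap.coe_coe, pow_succ, ContinuousLinearMap.mul_apply]
    exact h1
  have hexists : ∃ j, Nsp L z j = Nsp L z (j+1) := by
    by_contra hne
    push_neg at hne
    have hlt : ∀ j, ∃ w, w ∈ Nsp L z (j+1) ∧ w ∉ Nsp L z j := by
      intro j
      obtain ⟨w, hw1, hw2⟩ := SetLike.exists_of_lt
        (lt_of_le_of_ne (Nsp_mono L z (Nat.le_succ j)) (hne j))
      exact ⟨w, hw1, hw2⟩
    have hries := fun j => riesz_nested (ContinuousLinearMap.isClosed_ker _)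
      (Nsp_mono L z (Nat.le_succ j)) (hlt j)
    choose u humem hunorm hudist using hries
    apply qc_chain hKM hs0 hsρ hnorm h8 (fun _ => z ^ M) ?_ (fun j => Nsp L z j)
      u hunorm hudist ?_
    · intro i
      rw [norm_pow]
      exact pow_le_pow_left₀ hρ0.le hz M
    · intro a c hac
      have key : ∀ m n : ℕ, m + 1 ≤ n → (L ^ M) (u m) ∈ Nsp L z n := by
        intro m n hmn
        exact Nsp_mono L z hmn
          (comm_mem_Nsp L (commute_Lpow_Bop L z M) (humem m))
      rcases Ne.lt_or_gt hac with h | h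
      · right
        exact ⟨shift_mem_Nsp L z M (humem c), key a c (Nat.succ_le_of_lt h)⟩
      · left
        exact ⟨shift_mem_Nsp L z M (humem a), key c a (Nat.succ_le_of_lt h)⟩
  obtain ⟨j₀, hj₀⟩ := hexists
  have hstepall : ∀ i, Nsp L z (j₀ + i) = Nsp L z (j₀ + i + 1) := by
    intro i
    induction i with
    | zero => exact hj₀
    | succ i ih => exact hstep _ ih
  have hall : ∀ i, Nsp L z (j₀ + i) = Nsp L z j₀ := by
    intro i
    induction i with
    | zero => rfl
    | succ i ih => rw [Nat.add_succ, ← hstepall i]; exact ih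
  refine ⟨j₀ + 1, Nat.succ_pos _, ?_⟩
  intro q hq
  obtain ⟨i, rfl⟩ := Nat.exists_eq_add_of_le hq
  have h1 := hall (1 + i)
  rw [← Nat.add_assoc] at h1
  rw [h1, ← hall 1]

/-- Closedness of ranges of powers. -/
lemma qc_range_closed (hM : 0 < M) (hKM : IsCompactOperator KM) (hs0 : 0 ≤ s) (hsρ : s < ρ₀)
    (hnorm : ‖L ^ M - KM‖ ≤ s ^ M) (h8 : 8 * s ^ M ≤ ρ₀ ^ M)
    (z : ℂ) (hz : ρ₀ ≤ ‖z‖) (j : ℕ) : IsClosed ((Rsp L z j : Set E)) := by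
  haveI := qc_kerFD hM hKM hs0 hsρ hnorm h8 z hz j
  obtain ⟨Cl, hClc, hCompl⟩ :=
    (Submodule.ClosedComplemented.of_finiteDimensional (Nsp L z j)).exists_isClosed_isCompl
  have hbb : ∃ c : ℝ, 0 < c ∧ ∀ w ∈ Cl, c * ‖w‖ ≤ ‖((Bop L z) ^ j) w‖ := by
    by_contra hno
    push_neg at hno
    have hseq : ∀ n : ℕ, ∃ w, w ∈ Cl ∧ ‖w‖ = 1 ∧
        ‖((Bop L z) ^ j) w‖ < 1/((n : ℝ)+1) := by
      intro n
      obtain ⟨w, hwCl, hwlt⟩ := hno (1/((n : ℝ)+1)) (by positivity)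
      have hw0 : w ≠ 0 := by
        rintro rfl
        rw [norm_zero, mul_zero, map_zero, norm_zero] at hwlt
        exact lt_irrefl _ hwlt
      have hwn : ‖w‖ ≠ 0 := norm_ne_zero_iff.2 hw0
      have hwpos : 0 < ‖w‖ := norm_pos_iff.2 hw0
      refine ⟨((‖w‖ : ℂ))⁻¹ • w, Cl.smul_mem _ hwCl, ?_, ?_⟩
      · rw [norm_smul, norm_inv, Complex.norm_real, Real.norm_eq_abs,
          abs_of_nonneg (norm_nonneg w), inv_mul_cancel₀ hwn]
      · rw [map_smul, norm_smul, norm_inv, Complex.norm_real, Real.norm_eq_abs,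
          abs_of_nonneg (norm_nonneg w)]
        rw [inv_mul_lt_iff₀ hwpos]
        calc ‖((Bop L z) ^ j) w‖ < 1/((n : ℝ)+1) * ‖w‖ := hwlt
        _ = ‖w‖ * (1/((n : ℝ)+1)) := by ring
    choose w hwCl hwnorm hwlt using hseq
    have h0 : Tendsto (fun n => ((Bop L z) ^ j) (w n)) atTop (𝓝 0) := by
      rw [tendsto_zero_iff_norm_tendsto_zero]
      apply squeeze_zero (fun n => norm_nonneg _) (g := fun n : ℕ => 1/((n : ℝ)+1))
      · exact fun n => (hwlt n).le
      · exact tendsto_one_div_add_atTop_nhds_zero_nat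
    obtain ⟨φ, hφ, y, hy⟩ :=
      qc_conv hM hKM hs0 hsρ hnorm z hz j w 1 (fun n => (hwnorm n).le) h0
    have hyCl : y ∈ Cl := hClc.mem_of_tendsto hy
      (Filter.Eventually.of_forall fun n => hwCl _)
    have hynorm : ‖y‖ = 1 := by
      have h1 : Tendsto (fun n => ‖w (φ n)‖) atTop (𝓝 ‖y‖) := hy.norm
      have h2 : Tendsto (fun n => ‖w (φ n)‖) atTop (𝓝 1) := by
        simpa [hwnorm] using (tendsto_const_nhds : Tendsto (fun _ : ℕ => (1:ℝ)) atTop _)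
      exact tendsto_nhds_unique h1 h2
    have hyker : ((Bop L z) ^ j) y = 0 := by
      have h1 : Tendsto (fun n => ((Bop L z) ^ j) (w (φ n))) atTop
          (𝓝 (((Bop L z) ^ j) y)) := (((Bop L z) ^ j).continuous.tendsto y).comp hy
      have h2 : Tendsto (fun n => ((Bop L z) ^ j) (w (φ n))) atTop (𝓝 0) :=
        h0.comp hφ.tendsto_atTop
      exact tendsto_nhds_unique h1 h2
    have hmem : y ∈ Nsp L z j ⊓ Cl := ⟨hyker, hyCl⟩
    rw [hCompl.inf_eq_bot, Submodule.mem_bot] at hmem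
    rw [hmem, norm_zero] at hynorm
    norm_num at hynorm
  obtain ⟨c, hc0, hcb⟩ := hbb
  set m : Cl →L[ℂ] E := ((Bop L z) ^ j).comp Cl.subtypeL with hm
  have hal : AntilipschitzWith (c⁻¹.toNNReal) m := by
    apply m.antilipschitz_of_bound
    intro w
    rw [Real.coe_toNNReal _ (inv_nonneg.2 hc0.le)]
    rw [le_inv_mul_iff₀ hc0]
    exact hcb w w.2
  haveI : CompleteSpace Cl := hClc.completeSpace_coe
  have hclr : IsClosed (Set.range m) := hal.isClosed_range m.uniformContinuous
  have heq : ((Rsp L z j : Submodule ℂ E) : Set E) = Set.range m := by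
    ext y
    constructor
    · rintro ⟨x, rfl⟩
      have hx : x ∈ Nsp L z j ⊔ Cl := by rw [hCompl.sup_eq_top]; trivial
      obtain ⟨a, ha, d, hd, rfl⟩ := Submodule.mem_sup.mp hx
      refine ⟨⟨d, hd⟩, ?_⟩
      show ((Bop L z) ^ j) d = ((Bop L z) ^ j) (a + d)
      have ha0 : ((Bop L z) ^ j) a = 0 := ha
      rw [map_add, ha0, zero_add]
    · rintro ⟨ww, rfl⟩
      exact ⟨ww, rfl⟩
  rw [show ((Rsp L z j : Submodule ℂ E) : Set E) = Set.range m from heq]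
  exact hclr

/-- Stabilization of the range chain. -/
lemma qc_range_stab (hM : 0 < M) (hKM : IsCompactOperator KM) (hs0 : 0 ≤ s) (hsρ : s < ρ₀)
    (hnorm : ‖L ^ M - KM‖ ≤ s ^ M) (h8 : 8 * s ^ M ≤ ρ₀ ^ M)
    (z : ℂ) (hz : ρ₀ ≤ ‖z‖) :
    ∃ p, 0 < p ∧ ∀ q, p ≤ q → Rsp L z q = Rsp L z p := by
  have hρ0 : 0 < ρ₀ := lt_of_le_of_lt hs0 hsρ
  have hstep : ∀ j, Rsp L z (j+1) = Rsp L z j → Rsp L z (j+2) = Rsp L z (j+1) := by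
    intro j hj
    refine le_antisymm (Rsp_anti L z (Nat.le_succ _)) ?_
    rintro w ⟨y, rfl⟩
    have h1 : ((Bop L z) ^ j) y ∈ Rsp L z (j+1) := by
      rw [hj]; exact ⟨y, rfl⟩
    obtain ⟨t, ht⟩ := h1
    refine ⟨t, ?_⟩
    calc ((Bop L z) ^ (j+2)) t = Bop L z (((Bop L z) ^ (j+1)) t) := by
          rw [← ContinuousLinearMap.mul_apply, ← pow_succ']
    _ = Bop L z (((Bop L z) ^ j) y) := by rw [← ht, ContinuousLinearMap.coe_coe]
    _ = ((Bop L z) ^ (j+1)) y := by rw [← ContinuousLinearMap.mul_apply, ← pow_succ']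
  have hexists : ∃ j, Rsp L z (j+1) = Rsp L z j := by
    by_contra hne
    push_neg at hne
    have hlt : ∀ j, ∃ w, w ∈ Rsp L z j ∧ w ∉ Rsp L z (j+1) := by
      intro j
      obtain ⟨w, hw1, hw2⟩ := SetLike.exists_of_lt
        (lt_of_le_of_ne (Rsp_anti L z (Nat.le_succ j)) (hne j))
      exact ⟨w, hw1, hw2⟩
    have hries := fun j => riesz_nested
      (qc_range_closed hM hKM hs0 hsρ hnorm h8 z hz (j+1))
      (Rsp_anti L z (Nat.le_succ j)) (hlt j)
    choose u humem hunorm hudist using hries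
    apply qc_chain hKM hs0 hsρ hnorm h8 (fun _ => z ^ M) ?_
      (fun j => Rsp L z (j+1)) u hunorm hudist ?_
    · intro i
      rw [norm_pow]
      exact pow_le_pow_left₀ hρ0.le hz M
    · intro a c hac
      have key : ∀ m n : ℕ, m + 1 ≤ n → (L ^ M) (u n) ∈ Rsp L z (m+1) := by
        intro m n hmn
        exact Rsp_anti L z hmn
          (comm_mem_Rsp L (commute_Lpow_Bop L z M) (humem n))
      rcases Ne.lt_or_gt hac with h | h
      · left
        exact ⟨shift_mem_Rsp L z M (humem a), key a c (Nat.succ_le_of_lt h)⟩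
      · right
        exact ⟨shift_mem_Rsp L z M (humem c), key c a (Nat.succ_le_of_lt h)⟩
  obtain ⟨j₀, hj₀⟩ := hexists
  have hstepall : ∀ i, Rsp L z (j₀ + i + 1) = Rsp L z (j₀ + i) := by
    intro i
    induction i with
    | zero => exact hj₀
    | succ i ih => exact hstep _ ih
  have hall : ∀ i, Rsp L z (j₀ + i) = Rsp L z j₀ := by
    intro i
    induction i with
    | zero => rfl
    | succ i ih => rw [show j₀ + (i+1) = j₀ + i + 1 from rfl, hstepall i]; exact ih
  refine ⟨j₀ + 1, Nat.succ_pos _, ?_⟩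
  intro q hq
  obtain ⟨i, rfl⟩ := Nat.exists_eq_add_of_le hq
  have h1 := hall (1 + i)
  rw [← Nat.add_assoc] at h1
  rw [h1, ← hall 1]

/-- The Riesz decomposition at a point `z` with `ρ₀ ≤ ‖z‖`. -/
lemma qc_riesz (hM : 0 < M) (hKM : IsCompactOperator KM) (hs0 : 0 ≤ s) (hsρ : s < ρ₀)
    (hnorm : ‖L ^ M - KM‖ ≤ s ^ M) (h8 : 8 * s ^ M ≤ ρ₀ ^ M)
    (z : ℂ) (hz : ρ₀ ≤ ‖z‖) :
    ∃ N R : Submodule ℂ E,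
      IsClosed (R : Set E) ∧ FiniteDimensional ℂ N ∧
      N ⊓ R = ⊥ ∧ N ⊔ R = ⊤ ∧
      Submodule.map (Bop L z : E →ₗ[ℂ] E) R = R ∧
      LinearMap.ker (Bop L z : E →ₗ[ℂ] E) ≤ N ∧
      (∀ T : E →L[ℂ] E, Commute T (Bop L z) →
        (∀ x ∈ N, T x ∈ N) ∧ (∀ x ∈ R, T x ∈ R)) ∧
      (∀ μ : ℂ, μ ≠ z → LinearMap.ker (Bop L μ : E →ₗ[ℂ] E) ⊓ N = ⊥) := by
  obtain ⟨p₁, hp₁, hkst⟩ := qc_ker_stab hM hKM hs0 hsρ hnorm h8 z hz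
  obtain ⟨p₂, hp₂, hrst⟩ := qc_range_stab hM hKM hs0 hsρ hnorm h8 z hz
  set p := max p₁ p₂ with hp
  have hppos : 0 < p := lt_of_lt_of_le hp₁ (le_max_left _ _)
  have hkst' : ∀ q, p ≤ q → Nsp L z q = Nsp L z p := by
    intro q hq
    rw [hkst q (le_trans (le_max_left _ _) hq), hkst p (le_max_left _ _)]
  have hrst' : ∀ q, p ≤ q → Rsp L z q = Rsp L z p := by
    intro q hq
    rw [hrst q (le_trans (le_max_right _ _) hq), hrst p (le_max_right _ _)]
  refine ⟨Nsp L z p, Rsp L z p, qc_range_closed hM hKM hs0 hsρ hnorm h8 z hz p,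
    qc_kerFD hM hKM hs0 hsρ hnorm h8 z hz p, ?_, ?_, ?_, ?_, ?_, ?_⟩
  · -- disjoint
    rw [eq_bot_iff]
    rintro x ⟨hxN, hxR⟩
    obtain ⟨y, rfl⟩ := hxR
    have h2p : y ∈ Nsp L z (p + p) := by
      rw [Nsp, LinearMap.mem_ker, ContinuousLinearMap.coe_coe, pow_add, ContinuousLinearMap.mul_apply]
      exact hxN
    rw [hkst' (p+p) (Nat.le_add_right p p)] at h2p
    have h0 : ((Bop L z) ^ p) y = 0 := h2p
    simp only [ContinuousLinearMap.coe_coe]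
    simp [h0]
  · -- codisjoint
    rw [eq_top_iff]
    intro x _
    have hmem : ((Bop L z) ^ p) x ∈ Rsp L z (p + p) := by
      rw [hrst' (p+p) (Nat.le_add_right p p)]
      exact ⟨x, rfl⟩
    obtain ⟨u, hu⟩ := hmem
    have hx1 : x - ((Bop L z) ^ p) u ∈ Nsp L z p := by
      rw [Nsp, LinearMap.mem_ker, ContinuousLinearMap.coe_coe, map_sub]
      rw [← ContinuousLinearMap.mul_apply, ← pow_add]
      rw [← hu, ContinuousLinearMap.coe_coe, sub_self]
    have hx2 : ((Bop L z) ^ p) u ∈ Rsp L z p := ⟨u, rfl⟩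
    have : x = (x - ((Bop L z) ^ p) u) + ((Bop L z) ^ p) u := by abel
    rw [this]
    exact Submodule.add_mem _ (Submodule.mem_sup_left hx1) (Submodule.mem_sup_right hx2)
  · -- map B R = R
    have h1 : Submodule.map (Bop L z : E →ₗ[ℂ] E) (Rsp L z p) = Rsp L z (p+1) := by
      apply le_antisymm
      · rintro _ ⟨x, ⟨y, rfl⟩, rfl⟩
        refine ⟨y, ?_⟩
        simp only [ContinuousLinearMap.coe_coe]
        rw [pow_succ', ContinuousLinearMap.mul_apply]
      · rintro _ ⟨y, rfl⟩
        refine ⟨((Bop L z) ^ p) y, ⟨y, rfl⟩, ?_⟩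
        simp only [ContinuousLinearMap.coe_coe]
        rw [← ContinuousLinearMap.mul_apply, ← pow_succ']
    rw [h1]
    exact hrst' (p+1) (Nat.le_succ p)
  · -- ker ≤ N
    intro x hx
    have : x ∈ Nsp L z 1 := by
      rw [Nsp, pow_one]
      exact hx
    exact Nsp_mono L z hppos this
  · -- commuting operators preserve N and R
    intro T hT
    exact ⟨fun x hx => comm_mem_Nsp L hT hx, fun x hx => comm_mem_Rsp L hT hx⟩
  · -- coprimality
    intro μ hμ
    have h := ker_pow_disjoint L hμ 1 p
    rw [Nsp, pow_one] at h
    exact h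

/-- If `z` is not an eigenvalue and `ρ₀ ≤ ‖z‖`, then `z•1 - L` is invertible. -/
lemma qc_not_eig_isUnit (hM : 0 < M) (hKM : IsCompactOperator KM) (hs0 : 0 ≤ s)
    (hsρ : s < ρ₀) (hnorm : ‖L ^ M - KM‖ ≤ s ^ M) (h8 : 8 * s ^ M ≤ ρ₀ ^ M)
    (z : ℂ) (hz : ρ₀ ≤ ‖z‖) (hne : ∀ x, L x = z • x → x = 0) :
    IsUnit (Bop L z) := by
  have hker : ∀ j, Nsp L z j = ⊥ := by
    intro j
    induction j with
    | zero =>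
        rw [Nsp, pow_zero]
        ext x
        simp [LinearMap.mem_ker]
    | succ j ih =>
        rw [eq_bot_iff]
        intro x hx
        have h1 : ((Bop L z) ^ j) (Bop L z x) = 0 := by
          rw [← ContinuousLinearMap.mul_apply, ← pow_succ]
          exact hx
        have h2 : Bop L z x ∈ Nsp L z j := h1
        rw [ih, Submodule.mem_bot] at h2
        have h3 : L x = z • x := by
          have : z • x - L x = 0 := by
            rw [show z • x - L x = Bop L z x from ?_, h2]
            rw [Bop]
            simp
          have := sub_eq_zero.mp this
          exact this.symm
        rw [Submodule.mem_bot]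
        exact hne x h3
  obtain ⟨p, hppos, hrst⟩ := qc_range_stab hM hKM hs0 hsρ hnorm h8 z hz
  have hsurj : LinearMap.range (Bop L z : E →ₗ[ℂ] E) = ⊤ := by
    rw [eq_top_iff]
    intro x _
    have hmem : ((Bop L z) ^ p) x ∈ Rsp L z (p + 1) := by
      rw [hrst (p+1) (Nat.le_succ p)]
      exact ⟨x, rfl⟩
    obtain ⟨u, hu⟩ := hmem
    have h1 : x - Bop L z u ∈ Nsp L z p := by
      rw [Nsp, LinearMap.mem_ker, ContinuousLinearMap.coe_coe, map_sub, ← ContinuousLinearMap.mul_apply, ← pow_succ]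
      rw [← hu, ContinuousLinearMap.coe_coe, sub_self]
    rw [hker p, Submodule.mem_bot, sub_eq_zero] at h1
    exact ⟨u, h1.symm⟩
  have hinj : LinearMap.ker (Bop L z : E →ₗ[ℂ] E) = ⊥ := by
    have := hker 1
    rw [Nsp, pow_one] at this
    exact this
  set e := ContinuousLinearEquiv.ofBijective (Bop L z) hinj hsurj with he
  refine isUnit_iff_exists.mpr ⟨(e.symm : E →L[ℂ] E), ?_, ?_⟩
  · ext x
    have : Bop L z ((e.symm : E →L[ℂ] E) x) = e (e.symm x) := rfl
    rw [ContinuousLinearMap.mul_apply, ContinuousLinearMap.one_apply, this,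
      e.apply_symm_apply]
  · ext x
    have : (e.symm : E →L[ℂ] E) (Bop L z x) = e.symm (e x) := rfl
    rw [ContinuousLinearMap.mul_apply, ContinuousLinearMap.one_apply, this,
      e.symm_apply_apply]

/-- The outer spectrum is finite. -/
lemma qc_spec_finite (hM : 0 < M) (hKM : IsCompactOperator KM) (hs0 : 0 ≤ s)
    (hsρ : s < ρ₀) (hnorm : ‖L ^ M - KM‖ ≤ s ^ M) (h8 : 8 * s ^ M ≤ ρ₀ ^ M) :
    {z : ℂ | z ∈ spectrum ℂ L ∧ ρ₀ ≤ ‖z‖}.Finite := by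
  apply (qc_eigen_finite hM hKM hs0 hsρ hnorm h8).subset
  rintro z ⟨hspec, hz⟩
  refine ⟨hz, ?_⟩
  by_contra hne
  push_neg at hne
  have : ∀ x, L x = z • x → x = 0 := by
    intro x hx
    by_contra hx0
    exact (hne x hx0) hx
  have hunit := qc_not_eig_isUnit hM hKM hs0 hsρ hnorm h8 z hz this
  rw [spectrum.mem_iff] at hspec
  apply hspec
  rwa [Algebra.algebraMap_eq_smul_one]

end QuasiCompact

/-! ### Extracting data from the essential spectral radius -/

lemma exists_compact_approx {L : E →L[ℂ] E} {s' : ℝ} (hs0 : 0 ≤ s')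
    (h : essSpectralRadius L < ENNReal.ofReal s') :
    ∃ N : ℕ, 0 < N ∧ ∃ K : E →L[ℂ] E, IsCompactOperator K ∧ ‖L ^ N - K‖ ≤ s' ^ N := by
  rw [essSpectralRadius, iInf_lt_iff] at h
  obtain ⟨m, hm⟩ := h
  set a := ⨅ K ∈ {K : E →L[ℂ] E | IsCompactOperator K},
      ENNReal.ofReal ‖L ^ (m + 1) - K‖ with ha
  have hafin : a ≠ ⊤ := by
    apply ne_top_of_le_ne_top (b := ENNReal.ofReal ‖L ^ (m+1) - (0 : E →L[ℂ] E)‖)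
      ENNReal.ofReal_ne_top
    exact iInf₂_le (0 : E →L[ℂ] E) isCompactOperator_zero
  have hmid : a < (ENNReal.ofReal s') ^ (m + 1) := by
    have harith : ((1:ℝ)/(↑m+1)) * ((↑m:ℝ)+1) = 1 := by
      field_simp
    have hml : a ^ (((1:ℝ)/(↑m+1)) * ((↑m:ℝ)+1)) < ENNReal.ofReal s' ^ (((↑m:ℝ))+1) := by
      rw [ENNReal.rpow_mul]
      exact ENNReal.rpow_lt_rpow hm (by positivity)
    rw [harith, ENNReal.rpow_one] at hml
    have hr : ENNReal.ofReal s' ^ (((↑m:ℝ))+1) = ENNReal.ofReal s' ^ (m+1 : ℕ) := by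
      rw [← ENNReal.rpow_natCast (ENNReal.ofReal s') (m+1)]
      congr 1
      push_cast
      ring
    rw [hr] at hml
    exact hml
  rw [ha, iInf_lt_iff] at hmid
  obtain ⟨K, hK⟩ := hmid
  rw [iInf_lt_iff] at hK
  obtain ⟨hKc, hKlt⟩ := hK
  refine ⟨m + 1, Nat.succ_pos m, K, hKc, ?_⟩
  have : ENNReal.ofReal ‖L ^ (m+1) - K‖ < ENNReal.ofReal (s' ^ (m+1)) := by
    rw [ENNReal.ofReal_pow hs0]
    exact hKlt
  exact le_of_lt ((ENNReal.ofReal_lt_ofReal_iff_of_nonneg (norm_nonneg _)).mp this)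

lemma pow_compact_approx {L K : E →L[ℂ] E} (hK : IsCompactOperator K) {s' : ℝ}
    (hs0 : 0 ≤ s') {N : ℕ} (h : ‖L ^ N - K‖ ≤ s' ^ N) :
    ∀ k : ℕ, 0 < k → ∃ K' : E →L[ℂ] E, IsCompactOperator K' ∧ ‖L ^ (k * N) - K'‖ ≤ s' ^ (k * N) := by
  intro k hk
  induction k with
  | zero => exact absurd hk (lt_irrefl 0)
  | succ k ih =>
      rcases Nat.eq_zero_or_pos k with rfl | hkpos
      · refine ⟨K, hK, ?_⟩
        simpa [one_mul] using h
      · obtain ⟨K1, hK1c, hK1⟩ := ih hkpos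
        refine ⟨K1 * L ^ N + (L ^ (k * N) - K1) * K, ?_, ?_⟩
        · apply IsCompactOperator.add
          · have h1 : IsCompactOperator (⇑K1 ∘ ⇑(L ^ N)) := hK1c.comp_clm (L ^ N)
            exact h1
          · have h2 : IsCompactOperator (⇑(L ^ (k*N) - K1) ∘ ⇑K) :=
              hK.continuous_comp (L ^ (k*N) - K1).continuous
            exact h2
        · have hid : L ^ ((k+1) * N) - (K1 * L ^ N + (L ^ (k * N) - K1) * K) =
              (L ^ (k * N) - K1) * (L ^ N - K) := by
            have hpow : L ^ ((k+1) * N) = L ^ (k * N) * L ^ N := by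
              rw [← pow_add]
              congr 1
              ring
            rw [hpow]
            noncomm_ring
          rw [hid]
          calc ‖(L ^ (k * N) - K1) * (L ^ N - K)‖
              ≤ ‖L ^ (k * N) - K1‖ * ‖L ^ N - K‖ := norm_mul_le _ _
          _ ≤ s' ^ (k * N) * s' ^ N := by
              apply mul_le_mul hK1 h (norm_nonneg _) (by positivity)
          _ = s' ^ ((k+1) * N) := by
              rw [← pow_add]
              congr 1
              ring


/-- A bijective CLM on a Banach space is a unit. -/
lemma isUnit_of_bijective {X : Type*} [NormedAddCommGroup X] [NormedSpace ℂ X]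
    [CompleteSpace X] (f : X →L[ℂ] X)
    (h1 : LinearMap.ker (f : X →ₗ[ℂ] X) = ⊥) (h2 : LinearMap.range (f : X →ₗ[ℂ] X) = ⊤) : IsUnit f := by
  set e := ContinuousLinearEquiv.ofBijective f h1 h2 with he
  refine isUnit_iff_exists.mpr ⟨(e.symm : X →L[ℂ] X), ?_, ?_⟩
  · ext x
    have hsy : f ((e.symm : X →L[ℂ] X) x) = e (e.symm x) := rfl
    rw [ContinuousLinearMap.mul_apply, ContinuousLinearMap.one_apply, hsy,
      e.apply_symm_apply]
  · ext x
    have hsy : (e.symm : X →L[ℂ] X) (f x) = e.symm (e x) := rfl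
    rw [ContinuousLinearMap.mul_apply, ContinuousLinearMap.one_apply, hsy,
      e.symm_apply_apply]

/-- The hard direction: a subspace achieving (up to `b`) the essential spectral radius. -/
lemma hard_direction (L : E →L[ℂ] E) {b : ℝ≥0∞} (hb : essSpectralRadius L < b) :
    ∃ (W : Submodule ℂ E) (_ : IsClosed (W : Set E)) (hW : ∀ x ∈ W, L x ∈ W),
      FiniteDimensional ℂ (E ⧸ W) ∧ spectralRadius ℂ (restrictCLM L W hW) ≤ b := by
  classical
  obtain ⟨s', hs'0, hs'1, hs'2⟩ := ENNReal.lt_iff_exists_real_btwn.mp hb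
  obtain ⟨ρ₀, hρ₀0, hρ₀1, hρ₀2⟩ := ENNReal.lt_iff_exists_real_btwn.mp hs'2
  have hsρ : s' < ρ₀ := by
    by_contra hcon
    push_neg at hcon
    exact absurd hρ₀1 (not_lt.mpr (ENNReal.ofReal_le_ofReal hcon))
  obtain ⟨N, hN, K, hKc, hKn⟩ := exists_compact_approx hs'0 hs'1
  have hρ0 : 0 < ρ₀ := lt_of_le_of_lt hs'0 hsρ
  obtain ⟨k0, hk0⟩ := exists_pow_lt_of_lt_one (show (0:ℝ) < 1/8 by norm_num)
    (show s'/ρ₀ < 1 from (div_lt_one hρ0).mpr hsρ)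
  set k := k0 + 1 with hk
  have hkpos : 0 < k := Nat.succ_pos _
  set M := k * N with hMdef
  have hMpos : 0 < M := Nat.mul_pos hkpos hN
  obtain ⟨KM, hKMc, hKMn⟩ := pow_compact_approx hKc hs'0 hKn k hkpos
  have hratio : (s'/ρ₀) ^ M ≤ 1/8 := by
    calc (s'/ρ₀) ^ M ≤ (s'/ρ₀) ^ k0 := by
          apply pow_le_pow_of_le_one (by positivity)
            (le_of_lt ((div_lt_one hρ0).mpr hsρ))
          calc k0 ≤ k0 + 1 := Nat.le_succ _
          _ ≤ (k0 + 1) * N := Nat.le_mul_of_pos_right _ hN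
    _ ≤ 1/8 := le_of_lt hk0
  have h8 : 8 * s' ^ M ≤ ρ₀ ^ M := by
    have h1 : s' ^ M = (s'/ρ₀) ^ M * ρ₀ ^ M := by
      rw [div_pow]
      field_simp
    have hρM : (0:ℝ) < ρ₀ ^ M := by positivity
    rw [h1]
    nlinarith [hratio, hρM]
  set S₀ : Set ℂ := {z | z ∈ spectrum ℂ L ∧ ρ₀ ≤ ‖z‖} with hS₀
  have hS₀fin : S₀.Finite := qc_spec_finite hMpos hKMc hs'0 hsρ hKMn h8
  have hdata : ∀ z : ℂ, z ∈ S₀ →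
      ∃ Nz Rz : Submodule ℂ E,
        IsClosed (Rz : Set E) ∧ FiniteDimensional ℂ Nz ∧
        Nz ⊓ Rz = ⊥ ∧ Nz ⊔ Rz = ⊤ ∧
        Submodule.map (Bop L z : E →ₗ[ℂ] E) Rz = Rz ∧
        LinearMap.ker (Bop L z : E →ₗ[ℂ] E) ≤ Nz ∧
        (∀ T : E →L[ℂ] E, Commute T (Bop L z) →
          (∀ x ∈ Nz, T x ∈ Nz) ∧ (∀ x ∈ Rz, T x ∈ Rz)) ∧
        (∀ μ : ℂ, μ ≠ z → LinearMap.ker (Bop L μ : E →ₗ[ℂ] E) ⊓ Nz = ⊥) :=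
    fun z hz => qc_riesz hMpos hKMc hs'0 hsρ hKMn h8 z hz.2
  choose! Nf Rf hRc hNfd hdisj hsup hmap hker hcomm hcop using hdata
  set T := hS₀fin.toFinset with hT
  set F : E →ₗ[ℂ] (∀ z : {w : ℂ // w ∈ T}, E ⧸ Rf z.1) :=
    LinearMap.pi (fun z => (Rf z.1).mkQ) with hF
  set W := LinearMap.ker F with hWdef
  have hmemW : ∀ x, x ∈ W ↔ ∀ z : ℂ, z ∈ S₀ → x ∈ Rf z := by
    intro x
    rw [hWdef, LinearMap.mem_ker]
    constructor
    · intro hx z hz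
      have h1 : F x ⟨z, hS₀fin.mem_toFinset.mpr hz⟩ = 0 := by rw [hx]; rfl
      rw [hF, LinearMap.pi_apply, Submodule.mkQ_apply,
        Submodule.Quotient.mk_eq_zero] at h1
      exact h1
    · intro hx
      funext z
      simp only [hF, LinearMap.pi_apply, Submodule.mkQ_apply, Pi.zero_apply,
        Submodule.Quotient.mk_eq_zero]
      exact hx z.1 (hS₀fin.mem_toFinset.mp z.2)
  have hWc : IsClosed ((W : Submodule ℂ E) : Set E) := by
    have hset : ((W : Submodule ℂ E) : Set E) =
        ⋂ (z : ℂ) (_ : z ∈ S₀), (Rf z : Set E) := by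
      ext x
      simp only [Set.mem_iInter, SetLike.mem_coe]
      exact hmemW x
    rw [hset]
    refine isClosed_iInter fun z => isClosed_iInter fun hz => hRc z hz
  have hWL : ∀ x ∈ W, L x ∈ W := by
    intro x hx
    rw [hmemW] at hx ⊢
    intro z hz
    exact ((hcomm z hz) L (commute_L_Bop L z)).2 x (hx z hz)
  -- finite dimensionality of the quotient
  haveI hqFD : ∀ z : {w : ℂ // w ∈ T}, FiniteDimensional ℂ (E ⧸ Rf z.1) := by
    intro z
    have hzS : (z : ℂ) ∈ S₀ := hS₀fin.mem_toFinset.mp z.2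
    haveI := hNfd z.1 hzS
    set f : Nf z.1 →ₗ[ℂ] E ⧸ Rf z.1 := (Rf z.1).mkQ.comp (Nf z.1).subtype with hf
    apply Module.Finite.of_surjective f
    intro q
    obtain ⟨x, rfl⟩ := (Rf z.1).mkQ_surjective q
    have hx : x ∈ Nf z.1 ⊔ Rf z.1 := by rw [hsup z.1 hzS]; trivial
    obtain ⟨n, hn, r, hr, rfl⟩ := Submodule.mem_sup.mp hx
    refine ⟨⟨n, hn⟩, ?_⟩
    show (Rf z.1).mkQ n = (Rf z.1).mkQ (n + r)
    rw [map_add]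
    have h0 : (Rf z.1).mkQ r = 0 := by
      rwa [Submodule.mkQ_apply, Submodule.Quotient.mk_eq_zero]
    rw [h0, add_zero]
  have hWFD : FiniteDimensional ℂ (E ⧸ W) := by
    haveI : FiniteDimensional ℂ (LinearMap.range F) := inferInstance
    exact Module.Finite.equiv F.quotKerEquivRange.symm
  -- bijectivity of `Bop L μ` on `W` for all large `μ`
  have hbij : ∀ μ : ℂ, ρ₀ ≤ ‖μ‖ →
      (∀ x ∈ W, Bop L μ x = 0 → x = 0) ∧ (∀ w ∈ W, ∃ u ∈ W, Bop L μ u = w) := by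
    intro μ hμ
    by_cases hμS : μ ∈ S₀
    · constructor
      · intro x hxW hx0
        have hxR : x ∈ Rf μ := (hmemW x).mp hxW μ hμS
        have hxN : x ∈ Nf μ := hker μ hμS (by rwa [LinearMap.mem_ker, ContinuousLinearMap.coe_coe])
        have hxbot : x ∈ Nf μ ⊓ Rf μ := ⟨hxN, hxR⟩
        rw [hdisj μ hμS] at hxbot
        simpa using hxbot
      · intro w hwW
        have hwR : w ∈ Rf μ := (hmemW w).mp hwW μ hμS
        have hwmap : w ∈ Submodule.map (Bop L μ : E →ₗ[ℂ] E) (Rf μ) := by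
          rw [hmap μ hμS]; exact hwR
        obtain ⟨u, huR, huw⟩ := hwmap
        refine ⟨u, ?_, huw⟩
        rw [hmemW]
        intro z hz
        by_cases hzμ : z = μ
        · subst hzμ; exact huR
        · have hu2 : u ∈ Nf z ⊔ Rf z := by rw [hsup z hz]; trivial
          obtain ⟨n, hn, r, hr, hnr⟩ := Submodule.mem_sup.mp hu2
          have hBn : Bop L μ n ∈ Nf z :=
            ((hcomm z hz) (Bop L μ) (commute_Bop_Bop L μ z)).1 n hn
          have hBr : Bop L μ r ∈ Rf z :=
            ((hcomm z hz) (Bop L μ) (commute_Bop_Bop L μ z)).2 r hr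
          have hwz : w ∈ Rf z := (hmemW w).mp hwW z hz
          have hBn' : Bop L μ n = w - Bop L μ r := by
            rw [← huw, ← hnr, map_add, ContinuousLinearMap.coe_coe]; abel
          have hBnR : Bop L μ n ∈ Rf z := by
            rw [hBn']; exact Submodule.sub_mem _ hwz hBr
          have hBn0 : Bop L μ n = 0 := by
            have hmem2 : Bop L μ n ∈ Nf z ⊓ Rf z := ⟨hBn, hBnR⟩
            rw [hdisj z hz] at hmem2
            simpa using hmem2
          have hn0 : n = 0 := by
            have hmem3 : n ∈ LinearMap.ker (Bop L μ : E →ₗ[ℂ] E) ⊓ Nf z :=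
              Submodule.mem_inf.mpr ⟨LinearMap.mem_ker.mpr hBn0, hn⟩
            rw [hcop z hz μ (fun h => hzμ h.symm)] at hmem3
            simpa using hmem3
          have hur2 : u = r := by rw [← hnr, hn0, zero_add]
          rw [hur2]
          exact hr
    · have hμspec : μ ∉ spectrum ℂ L := fun hc => hμS ⟨hc, hμ⟩
      have hunit : IsUnit (Bop L μ) := by
        rw [spectrum.notMem_iff, Algebra.algebraMap_eq_smul_one] at hμspec
        exact hμspec
      obtain ⟨U, hU⟩ := hunit
      constructor
      · intro x hxW hx0
        have h1 : ((U⁻¹ : (E →L[ℂ] E)ˣ) * U : E →L[ℂ] E) x = x := by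
          rw [U.inv_mul]
          rfl
        rw [ContinuousLinearMap.mul_apply, hU, hx0, map_zero] at h1
        exact h1.symm
      · intro w hwW
        refine ⟨(↑U⁻¹ : E →L[ℂ] E) w, ?_, ?_⟩
        · rw [hmemW]
          intro z hz
          have hCzU : Commute (↑U : E →L[ℂ] E) (Bop L z) := by
            rw [hU]; exact commute_Bop_Bop L μ z
          have hCinv : Commute (↑U⁻¹ : E →L[ℂ] E) (Bop L z) := hCzU.units_inv_left
          exact ((hcomm z hz) _ hCinv).2 w ((hmemW w).mp hwW z hz)
        · have h1 : ((U : (E →L[ℂ] E)ˣ) * ↑U⁻¹ : E →L[ℂ] E) w = w := by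
            rw [U.mul_inv]
            rfl
          rw [ContinuousLinearMap.mul_apply] at h1
          rw [← hU]
          exact h1
  haveI hWcs : CompleteSpace W := hWc.completeSpace_coe
  have hspec : ∀ μ : ℂ, μ ∈ spectrum ℂ (restrictCLM L W hWL) → ‖μ‖ < ρ₀ := by
    intro μ hμ
    by_contra hcon
    push_neg at hcon
    obtain ⟨hinj, hsurj⟩ := hbij μ hcon
    have hBW : ∀ x ∈ W, Bop L μ x ∈ W := by
      intro x hx
      have hBx : Bop L μ x = μ • x - L x := by rw [Bop]; simp
      rw [hBx]
      exact W.sub_mem (W.smul_mem μ hx) (hWL x hx)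
    have hker' : LinearMap.ker (restrictCLM (Bop L μ) W hBW : W →ₗ[ℂ] W) = ⊥ := by
      rw [LinearMap.ker_eq_bot']
      intro x hx
      have hx0 : Bop L μ (x : E) = 0 := by
        have h' := congrArg (Subtype.val) hx
        simpa [restrictCLM_coe] using h'
      exact Subtype.ext (hinj x x.2 hx0)
    have hrange' : LinearMap.range (restrictCLM (Bop L μ) W hBW : W →ₗ[ℂ] W) = ⊤ := by
      rw [LinearMap.range_eq_top]
      intro w
      obtain ⟨u, huW, huw⟩ := hsurj w w.2
      exact ⟨⟨u, huW⟩, Subtype.ext huw⟩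
    have hunit := isUnit_of_bijective (restrictCLM (Bop L μ) W hBW) hker' hrange'
    have heq : algebraMap ℂ (W →L[ℂ] W) μ - restrictCLM L W hWL
        = restrictCLM (Bop L μ) W hBW := by
      ext x
      have h1 : ((restrictCLM (Bop L μ) W hBW) x : E) = μ • (x : E) - L (x : E) := by
        rw [restrictCLM_coe, Bop]
        simp
      rw [h1]
      rw [ContinuousLinearMap.sub_apply, Algebra.algebraMap_eq_smul_one,
        ContinuousLinearMap.smul_apply, ContinuousLinearMap.one_apply]
      rw [Submodule.coe_sub, Submodule.coe_smul]
      rw [restrictCLM_coe]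
    rw [spectrum.mem_iff, heq] at hμ
    exact hμ hunit
  refine ⟨W, hWc, hWL, hWFD, ?_⟩
  have hsr : spectralRadius ℂ (restrictCLM L W hWL) ≤ ENNReal.ofReal ρ₀ := by
    show (⨆ μ ∈ spectrum ℂ (restrictCLM L W hWL), (‖μ‖₊ : ℝ≥0∞)) ≤ ENNReal.ofReal ρ₀
    apply iSup₂_le
    intro μ hμ
    calc (‖μ‖₊ : ℝ≥0∞) = ENNReal.ofReal ‖μ‖ := (ofReal_norm μ).symm
    _ ≤ ENNReal.ofReal ρ₀ := ENNReal.ofReal_le_ofReal (hspec μ hμ).le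
  exact le_trans hsr hρ₀2.le

/-- ENNReal auxiliary: if `x ≤ (c * y^(m+1))^(1/(m+1))` for arbitrarily large `m`,
then `x ≤ y`. -/
lemma ennreal_aux {c x y : ℝ≥0∞} (hc : c ≠ ⊤)
    (h : ∀ᶠ m : ℕ in atTop, x ≤ (c * y ^ (m+1)) ^ ((1:ℝ)/(m+1))) : x ≤ y := by
  have hsimp : ∀ m : ℕ, (c * y ^ (m+1)) ^ ((1:ℝ)/(m+1)) = c ^ ((1:ℝ)/(m+1)) * y := by
    intro m
    rw [ENNReal.mul_rpow_of_nonneg _ _ (by positivity)]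
    congr 1
    rw [← ENNReal.rpow_natCast y (m+1), ← ENNReal.rpow_mul]
    rw [show ((m+1 : ℕ):ℝ) * ((1:ℝ)/(↑m+1)) = 1 by push_cast; field_simp, ENNReal.rpow_one]
  apply ENNReal.le_of_forall_lt_one_mul_le
  intro a ha
  rcases eq_or_ne a 0 with rfl | ha0
  · simp
  have hainv : 1 < a⁻¹ := ENNReal.one_lt_inv.mpr ha
  have hev : ∀ᶠ m : ℕ in atTop, c ^ ((1:ℝ)/(↑m+1)) ≤ a⁻¹ := by
    have h1 := ENNReal.eventually_pow_one_div_le hc hainv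
    have h2 := (tendsto_add_atTop_nat 1).eventually h1
    apply h2.mono
    intro m hm
    have hcast : ((1:ℝ)/(↑(m + 1) : ℝ)) = ((1:ℝ)/(↑m+1)) := by push_cast; ring_nf
    rwa [hcast] at hm
  obtain ⟨m, hm1, hm2⟩ := (h.and hev).exists
  calc a * x ≤ a * (c ^ ((1:ℝ)/(↑m+1)) * y) := by
        apply mul_le_mul_right
        rw [← hsimp m]
        exact hm1
  _ = (a * c ^ ((1:ℝ)/(↑m+1))) * y := by ring
  _ ≤ (a * a⁻¹) * y := by
        apply mul_le_mul_left
        exact mul_le_mul_right hm2 a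
  _ = y := by
        rw [ENNReal.mul_inv_cancel ha0 (ha.trans_le le_top).ne, one_mul]

/-- The easy direction. -/
lemma easy_direction (L : E →L[ℂ] E) (W : Submodule ℂ E) (hWc : IsClosed (W : Set E))
    (hW : ∀ x ∈ W, L x ∈ W) (hFD : FiniteDimensional ℂ (E ⧸ W)) :
    essSpectralRadius L ≤ spectralRadius ℂ (restrictCLM L W hW) := by
  classical
  haveI : CompleteSpace W := hWc.completeSpace_coe
  haveI := hFD
  obtain ⟨π, hπ⟩ := Submodule.ClosedComplemented.of_quotient_finiteDimensional hWc
  set P : E →L[ℂ] E := W.subtypeL.comp π with hP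
  have hPW : ∀ x : W, P (x : E) = (x : E) := by
    intro x
    show (↑(π ↑x) : E) = ↑x
    rw [hπ x]
  -- the complement operator has finite rank
  have hQW : ∀ x ∈ W, ((1 : E →L[ℂ] E) - P) x = 0 := by
    intro x hx
    rw [ContinuousLinearMap.sub_apply, ContinuousLinearMap.one_apply]
    rw [hPW ⟨x, hx⟩, sub_self]
  set g : E ⧸ W →ₗ[ℂ] E := Submodule.liftQ W ((1 : E →L[ℂ] E) - P : E →ₗ[ℂ] E)
    (fun x hx => by
      rw [LinearMap.mem_ker]
      exact hQW x hx) with hg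
  have hrange : LinearMap.range ((1 : E →L[ℂ] E) - P : E →ₗ[ℂ] E) = LinearMap.range g :=
    (Submodule.range_liftQ _ _ _).symm
  haveI hgFD : FiniteDimensional ℂ (LinearMap.range g) :=
    Module.Finite.of_surjective g.rangeRestrict g.surjective_rangeRestrict
  set B := restrictCLM L W hW with hB
  -- compact approximants
  have happrox : ∀ m : ℕ, ∃ K : E →L[ℂ] E, IsCompactOperator K ∧
      ‖L ^ m - K‖ ≤ ‖π‖ * ‖B ^ m‖ := by
    intro m
    refine ⟨(L ^ m).comp ((1 : E →L[ℂ] E) - P), ?_, ?_⟩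
    · apply isCompactOperator_of_range_le _ (Submodule.map
        ((L ^ m : E →L[ℂ] E) : E →ₗ[ℂ] E) (LinearMap.range g))
      intro x
      refine ⟨((1 : E →L[ℂ] E) - P) x, ?_, by rfl⟩
      rw [← hrange]
      exact ⟨x, rfl⟩
    · have hid : L ^ m - (L ^ m).comp ((1 : E →L[ℂ] E) - P) = (L ^ m).comp P := by
        ext x
        simp only [ContinuousLinearMap.sub_apply, ContinuousLinearMap.comp_apply,
          ContinuousLinearMap.one_apply, map_sub]
        abel
      rw [hid]
      apply ContinuousLinearMap.opNorm_le_bound _ (by positivity)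
      intro x
      have hPx : (L ^ m) (P x) = ((B ^ m) (π x) : E) := by
        rw [hP]
        show (L ^ m) ((π x : W) : E) = _
        rw [restrictCLM_pow_coe]
      rw [ContinuousLinearMap.comp_apply, hPx]
      calc ‖((B ^ m) (π x) : E)‖ = ‖(B ^ m) (π x)‖ := rfl
      _ ≤ ‖B ^ m‖ * ‖π x‖ := ContinuousLinearMap.le_opNorm _ _
      _ ≤ ‖B ^ m‖ * (‖π‖ * ‖x‖) :=
          mul_le_mul_of_nonneg_left (ContinuousLinearMap.le_opNorm _ _)
            (norm_nonneg (B ^ m))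
      _ = ‖π‖ * ‖B ^ m‖ * ‖x‖ := by ring
  -- essRad bounded by each term
  have hterm : ∀ m : ℕ, essSpectralRadius L ≤
      (ENNReal.ofReal ‖π‖ * (‖B ^ (m+1)‖₊ : ℝ≥0∞)) ^ ((1:ℝ)/(m+1)) := by
    intro m
    obtain ⟨K, hKc, hKn⟩ := happrox (m+1)
    calc essSpectralRadius L
        ≤ (⨅ K' ∈ {K' : E →L[ℂ] E | IsCompactOperator K'},
            ENNReal.ofReal ‖L ^ (m + 1) - K'‖) ^ ((1 : ℝ) / (m + 1)) := iInf_le _ m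
    _ ≤ (ENNReal.ofReal ‖L ^ (m+1) - K‖) ^ ((1:ℝ)/(m+1)) := by
        apply ENNReal.rpow_le_rpow _ (by positivity)
        exact iInf₂_le K hKc
    _ ≤ (ENNReal.ofReal ‖π‖ * (‖B ^ (m+1)‖₊ : ℝ≥0∞)) ^ ((1:ℝ)/(m+1)) := by
        apply ENNReal.rpow_le_rpow _ (by positivity)
        rw [show (‖B ^ (m+1)‖₊ : ℝ≥0∞) = ENNReal.ofReal ‖B ^ (m+1)‖ from (ofReal_norm _).symm, ← ENNReal.ofReal_mul (norm_nonneg π)]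
        exact ENNReal.ofReal_le_ofReal hKn
  -- conclude via Gelfand
  apply le_of_forall_gt_imp_ge_of_dense
  intro y hy
  obtain ⟨y', hy'1, hy'2⟩ := exists_between hy
  have hG := spectrum.pow_nnnorm_pow_one_div_tendsto_nhds_spectralRadius B
  have hev := hG.eventually_lt_const hy'1
  have hev2 : ∀ᶠ m : ℕ in atTop,
      essSpectralRadius L ≤ (ENNReal.ofReal ‖π‖ * y' ^ (m+1)) ^ ((1:ℝ)/(↑m+1)) := by
    have h2 := (tendsto_add_atTop_nat 1).eventually hev
    apply h2.mono
    intro m hm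
    have hm' : (‖B ^ (m+1)‖₊ : ℝ≥0∞) ≤ y' ^ (m+1) := by
      have hfin : (‖B ^ (m+1)‖₊ : ℝ≥0∞) ≠ ⊤ := ENNReal.coe_ne_top
      have h3 : ((‖B ^ (m+1)‖₊ : ℝ≥0∞) ^ ((1:ℝ)/(↑(m+1) : ℝ))) ^ ((↑(m+1):ℝ)) ≤
          y' ^ ((↑(m+1):ℝ)) := ENNReal.rpow_le_rpow hm.le (by positivity)
      rw [← ENNReal.rpow_mul] at h3
      rw [show ((1:ℝ)/(↑(m+1) : ℝ)) * ((↑(m+1):ℝ)) = 1 by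
        push_cast; field_simp] at h3
      rw [ENNReal.rpow_one] at h3
      calc (‖B ^ (m+1)‖₊ : ℝ≥0∞) ≤ y' ^ ((↑(m+1):ℝ)) := h3
      _ = y' ^ (m+1) := by
          rw [← ENNReal.rpow_natCast y' (m+1)]
    calc essSpectralRadius L
        ≤ (ENNReal.ofReal ‖π‖ * (‖B ^ (m+1)‖₊ : ℝ≥0∞)) ^ ((1:ℝ)/(↑m+1)) := hterm m
    _ ≤ (ENNReal.ofReal ‖π‖ * y' ^ (m+1)) ^ ((1:ℝ)/(↑m+1)) := by
        apply ENNReal.rpow_le_rpow _ (by positivity)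
        exact mul_le_mul_right hm' _
  have := ennreal_aux ENNReal.ofReal_ne_top hev2
  exact le_trans this hy'2.le

end EssProof

/-- the essential spectral radius of `L` equals the infimum of the
spectral radii of restrictions of `L` to closed invariant subspaces of finite
codimension. -/
theorem stmt1 (L : E →L[ℂ] E) :
    essSpectralRadius L =
      sInf {r : ℝ≥0∞ | ∃ (W : Submodule ℂ E) (_ : IsClosed (W : Set E))
        (hW : ∀ x ∈ W, L x ∈ W), FiniteDimensional ℂ (E ⧸ W) ∧
          r = spectralRadius ℂ (restrictCLM L W hW)} := by
  apply le_antisymm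
  · apply le_sInf
    rintro r ⟨W, hWc, hW, hFD, rfl⟩
    exact EssProof.easy_direction L W hWc hW hFD
  · apply le_of_forall_gt_imp_ge_of_dense
    intro b hb
    obtain ⟨W, hWc, hW, hFD, hle⟩ := EssProof.hard_direction L hb
    exact le_trans (sInf_le ⟨W, hWc, hW, hFD, rfl⟩) hle
end

section
/- Let b : ℝᵈ → ℝ be defined by b(x) = 1 if ‖x‖ ≤ 1 and b(x) = ‖x‖^{−d−1} if ‖x‖ > 1, and for m ≥ 0 set b_m(x) = 2^{dm} b(2^m x). Then there exists a constant C > 0 (depending only on d) such that for all n, m ≥ 0 and all x ∈ ℝᵈ: (b_n ∗ b_m)(x) ≤ C · b_{min{n,m}}(x). -/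
/-!
By symmetry of the convolution we may take `m ≤ n`. For every `y`, one of the two factors of
`b_n(y) b_m(x - y)` is at most `2^(d+1) b_m(x)`: if `2^m ‖x‖ ≤ 1` then `b_m(x) = 2^(dm)` is
the maximum of `b_m`; otherwise one of `y`, `x - y` has norm at least `‖x‖ / 2`, `b` loses
at most a factor `2^(d+1)` when the norm is halved, and `b_n ≤ b_m` outside the ball of
radius `2^(-m)`.
Hence `b_n(y) b_m(x - y) ≤ 2^(d+1) b_m(x) (b_n(y) + b_m(x - y))`, and integrating in `y` gives
the bound with `C = 2^(d+2) ‖b‖₁`, since all `b_k` have the same integral.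
-/

open MeasureTheory

/-- The function `b(x) = 1` for `‖x‖ ≤ 1` and `b(x) = ‖x‖^{−d−1}` for `‖x‖ > 1`. -/
noncomputable def bfun (d : ℕ) (x : EuclideanSpace ℝ (Fin d)) : ℝ :=
  if ‖x‖ ≤ 1 then 1 else ‖x‖ ^ (-(d : ℝ) - 1)

/-- The rescaled function `b_m(x) = 2^{dm} b(2^m x)`. -/
noncomputable def bfunm (d : ℕ) (m : ℕ) (x : EuclideanSpace ℝ (Fin d)) : ℝ :=
  (2 : ℝ) ^ (d * m) * bfun d ((2 : ℝ) ^ m • x)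

lemma mul_le_mul_add_of_le_or_le {a b c : ℝ} (ha : 0 ≤ a) (hb : 0 ≤ b)
    (h : a ≤ c ∨ b ≤ c) : a * b ≤ c * (a + b) := by
  rcases h with h | h <;> nlinarith

lemma integral_mul_comp_sub_comm {G : Type*} [AddCommGroup G] [MeasurableSpace G]
    [MeasurableAdd G] [MeasurableNeg G] (μ : Measure G) [μ.IsAddLeftInvariant]
    [μ.IsNegInvariant] (f g : G → ℝ) (x : G) :
    ∫ y, f y * g (x - y) ∂μ = ∫ y, g y * f (x - y) ∂μ := by
  rw [← integral_sub_left_eq_self _ μ x]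
  simp only [sub_sub_cancel, mul_comm]

lemma rpow_neg_natCast_add_one (r : ℝ) (d : ℕ) : r ^ (-(d + 1 : ℝ)) = (r ^ (d + 1))⁻¹ := by
  rw [← Nat.cast_add_one, Real.rpow_neg_natCast, zpow_neg, zpow_natCast]

section bfun

variable {d : ℕ}

lemma bfun_eq_inv_max_pow (x : EuclideanSpace ℝ (Fin d)) :
    bfun d x = (max 1 ‖x‖ ^ (d + 1))⁻¹ := by
  unfold bfun
  split_ifs with h
  · rw [max_eq_left h, one_pow, inv_one]
  · rw [max_eq_right (not_le.1 h).le, ← neg_add', rpow_neg_natCast_add_one]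

lemma bfun_of_norm_le_one {x : EuclideanSpace ℝ (Fin d)} (hx : ‖x‖ ≤ 1) : bfun d x = 1 :=
  if_pos hx

lemma bfun_of_one_le_norm {x : EuclideanSpace ℝ (Fin d)} (hx : 1 ≤ ‖x‖) :
    bfun d x = (‖x‖ ^ (d + 1))⁻¹ := by
  rw [bfun_eq_inv_max_pow, max_eq_right hx]

lemma bfun_le_inv_pow {x : EuclideanSpace ℝ (Fin d)} {s : ℝ} (hs : 0 < s)
    (h : s ≤ max 1 ‖x‖) : bfun d x ≤ (s ^ (d + 1))⁻¹ := by
  rw [bfun_eq_inv_max_pow]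
  exact inv_anti₀ (by positivity) (pow_le_pow_left₀ hs.le h _)

lemma bfun_pos (x : EuclideanSpace ℝ (Fin d)) : 0 < bfun d x := by
  rw [bfun_eq_inv_max_pow]
  positivity

lemma bfun_le_one (x : EuclideanSpace ℝ (Fin d)) : bfun d x ≤ 1 :=
  (bfun_le_inv_pow one_pos (le_max_left _ _)).trans_eq (by rw [one_pow, inv_one])

lemma bfun_le_of_norm_le_two_mul {x z : EuclideanSpace ℝ (Fin d)} (h : ‖x‖ ≤ 2 * ‖z‖) :
    bfun d z ≤ 2 ^ (d + 1) * bfun d x := by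
  rcases le_total ‖x‖ 1 with hx | hx
  · rw [bfun_of_norm_le_one hx, mul_one]
    exact (bfun_le_one z).trans (one_le_pow₀ one_le_two)
  calc bfun d z ≤ ((‖x‖ / 2) ^ (d + 1))⁻¹ :=
        bfun_le_inv_pow (by positivity) (by linarith [le_max_right 1 ‖z‖])
    _ = 2 ^ (d + 1) * bfun d x := by
        rw [bfun_of_one_le_norm hx, div_pow, inv_div, div_eq_mul_inv]

lemma bfun_le_two_pow_mul_one_add_norm_rpow (x : EuclideanSpace ℝ (Fin d)) :
    bfun d x ≤ 2 ^ (d + 1) * (1 + ‖x‖) ^ (-(d + 1 : ℝ)) :=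
  calc bfun d x ≤ (((1 + ‖x‖) / 2) ^ (d + 1))⁻¹ :=
        bfun_le_inv_pow (by positivity)
          (by linarith [le_max_left 1 ‖x‖, le_max_right 1 ‖x‖])
    _ = 2 ^ (d + 1) * (1 + ‖x‖) ^ (-(d + 1 : ℝ)) := by
        rw [rpow_neg_natCast_add_one, div_pow, inv_div, div_eq_mul_inv]

lemma measurable_bfun : Measurable (bfun d) :=
  Measurable.ite (measurableSet_le measurable_norm measurable_const)
    measurable_const (measurable_norm.pow_const _)

lemma integrable_bfun : Integrable (bfun d) := by
  have hdim : (Module.finrank ℝ (EuclideanSpace ℝ (Fin d)) : ℝ) < d + 1 := by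
    rw [finrank_euclideanSpace_fin]; linarith
  refine ((integrable_one_add_norm hdim).const_mul (2 ^ (d + 1))).mono'
    measurable_bfun.aestronglyMeasurable
    (Filter.Eventually.of_forall fun x => ?_)
  rw [Real.norm_of_nonneg (bfun_pos x).le]
  exact bfun_le_two_pow_mul_one_add_norm_rpow x

lemma integral_bfun_pos : 0 < ∫ x, bfun d x := by
  rw [integral_pos_iff_support_of_nonneg (fun x => (bfun_pos x).le) integrable_bfun]
  exact (isOpen_univ.measure_pos volume Set.univ_nonempty).trans_le
    (measure_mono fun x _ => (bfun_pos x).ne')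

end bfun

section bfunm

variable {d : ℕ}

lemma norm_two_pow_smul (m : ℕ) (x : EuclideanSpace ℝ (Fin d)) :
    ‖(2 : ℝ) ^ m • x‖ = 2 ^ m * ‖x‖ := by
  rw [norm_smul, Real.norm_of_nonneg (by positivity)]

lemma bfunm_nonneg (m : ℕ) (x : EuclideanSpace ℝ (Fin d)) : 0 ≤ bfunm d m x :=
  mul_nonneg (by positivity) (bfun_pos _).le

lemma bfunm_le_two_pow (m : ℕ) (x : EuclideanSpace ℝ (Fin d)) : bfunm d m x ≤ 2 ^ (d * m) :=
  mul_le_of_le_one_right (by positivity) (bfun_le_one _)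

lemma bfunm_of_two_pow_mul_norm_le_one {m : ℕ} {x : EuclideanSpace ℝ (Fin d)}
    (hx : 2 ^ m * ‖x‖ ≤ 1) : bfunm d m x = 2 ^ (d * m) := by
  rw [bfunm, bfun_of_norm_le_one (by rwa [norm_two_pow_smul]), mul_one]

lemma bfunm_of_one_le_two_pow_mul_norm {m : ℕ} {x : EuclideanSpace ℝ (Fin d)}
    (hx : 1 ≤ 2 ^ m * ‖x‖) : bfunm d m x = (2 ^ m * ‖x‖ ^ (d + 1))⁻¹ := by
  rw [bfunm, bfun_of_one_le_norm (by rwa [norm_two_pow_smul]), norm_two_pow_smul, mul_pow,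
    ← pow_mul, show m * (d + 1) = d * m + m by ring, pow_add]
  field_simp

lemma bfunm_le_of_norm_le_two_mul (m : ℕ) {x z : EuclideanSpace ℝ (Fin d)}
    (h : ‖x‖ ≤ 2 * ‖z‖) : bfunm d m z ≤ 2 ^ (d + 1) * bfunm d m x := by
  have hscaled : ‖(2 : ℝ) ^ m • x‖ ≤ 2 * ‖(2 : ℝ) ^ m • z‖ := by
    rw [norm_two_pow_smul, norm_two_pow_smul, mul_left_comm]
    exact mul_le_mul_of_nonneg_left h (by positivity)
  rw [bfunm, bfunm, mul_left_comm]
  exact mul_le_mul_of_nonneg_left (bfun_le_of_norm_le_two_mul hscaled) (by positivity)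

lemma bfunm_anti_of_one_le_two_pow_mul_norm {m n : ℕ} (hmn : m ≤ n)
    {x : EuclideanSpace ℝ (Fin d)} (hx : 1 ≤ 2 ^ m * ‖x‖) :
    bfunm d n x ≤ bfunm d m x := by
  have hpow : (2 : ℝ) ^ m ≤ 2 ^ n := pow_le_pow_right₀ one_le_two hmn
  have hx0 : 0 < ‖x‖ := pos_of_mul_pos_right (one_pos.trans_le hx) (by positivity)
  rw [bfunm_of_one_le_two_pow_mul_norm hx,
    bfunm_of_one_le_two_pow_mul_norm (hx.trans (by gcongr))]
  exact inv_anti₀ (by positivity) (by gcongr)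

lemma bfunm_le_or_bfunm_sub_le {m n : ℕ} (hmn : m ≤ n) (x y : EuclideanSpace ℝ (Fin d)) :
    bfunm d n y ≤ 2 ^ (d + 1) * bfunm d m x ∨
      bfunm d m (x - y) ≤ 2 ^ (d + 1) * bfunm d m x := by
  rcases le_total (2 ^ m * ‖x‖) 1 with hsmall | hlarge
  · right
    rw [bfunm_of_two_pow_mul_norm_le_one hsmall]
    exact (bfunm_le_two_pow m _).trans
      (le_mul_of_one_le_left (by positivity) (one_le_pow₀ one_le_two))
  have htri : ‖x‖ ≤ ‖y‖ + ‖x - y‖ := norm_le_norm_add_norm_sub' x y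
  rcases le_total ‖x‖ (2 * ‖x - y‖) with hxy | hxy
  · exact .inr (bfunm_le_of_norm_le_two_mul m hxy)
  · left
    calc bfunm d n y ≤ 2 ^ (d + 1) * bfunm d n x := bfunm_le_of_norm_le_two_mul n (by linarith)
      _ ≤ 2 ^ (d + 1) * bfunm d m x := by
        gcongr; exact bfunm_anti_of_one_le_two_pow_mul_norm hmn hlarge

lemma measurable_bfunm (m : ℕ) : Measurable (bfunm d m) :=
  (measurable_bfun.comp (measurable_const_smul _)).const_mul _

lemma integrable_bfunm (m : ℕ) : Integrable (bfunm d m) :=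
  ((integrable_comp_smul_iff volume (bfun d) (pow_ne_zero m two_ne_zero)).2
    integrable_bfun).const_mul _

lemma integral_bfunm (m : ℕ) : ∫ x, bfunm d m x = ∫ x, bfun d x := by
  have hjac : |(((2 : ℝ) ^ m) ^ Module.finrank ℝ (EuclideanSpace ℝ (Fin d)))⁻¹|
      = ((2 : ℝ) ^ (d * m))⁻¹ := by
    rw [finrank_euclideanSpace_fin, ← pow_mul, mul_comm m d, abs_of_pos (by positivity)]
  simp only [bfunm]
  rw [integral_const_mul, Measure.integral_comp_smul, hjac, smul_eq_mul, ← mul_assoc,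
    mul_inv_cancel₀ (by positivity), one_mul]

lemma integral_bfunm_mul_bfunm_sub_le {m n : ℕ} (hmn : m ≤ n) (x : EuclideanSpace ℝ (Fin d)) :
    ∫ y, bfunm d n y * bfunm d m (x - y) ≤ 2 ^ (d + 2) * (∫ y, bfun d y) * bfunm d m x := by
  have hpointwise (y : EuclideanSpace ℝ (Fin d)) :
      bfunm d n y * bfunm d m (x - y) ≤
        2 ^ (d + 1) * bfunm d m x * (bfunm d n y + bfunm d m (x - y)) :=
    mul_le_mul_add_of_le_or_le (bfunm_nonneg n y) (bfunm_nonneg m _)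
      (bfunm_le_or_bfunm_sub_le hmn x y)
  have hn := integrable_bfunm (d := d) n
  have hm := (integrable_bfunm (d := d) m).comp_sub_left x
  have hbound := (hn.add hm).const_mul (2 ^ (d + 1) * bfunm d m x)
  have hprod : Integrable fun y => bfunm d n y * bfunm d m (x - y) :=
    hbound.mono' ((measurable_bfunm n).mul ((measurable_bfunm m).comp
      (measurable_const.sub measurable_id))).aestronglyMeasurable
      (Filter.Eventually.of_forall fun y => by
        rw [Real.norm_of_nonneg (mul_nonneg (bfunm_nonneg n y) (bfunm_nonneg m _))]
        exact hpointwise y)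
  calc ∫ y, bfunm d n y * bfunm d m (x - y)
      ≤ ∫ y, 2 ^ (d + 1) * bfunm d m x * (bfunm d n y + bfunm d m (x - y)) :=
        integral_mono hprod hbound hpointwise
    _ = 2 ^ (d + 1) * bfunm d m x * ((∫ y, bfunm d n y) + ∫ y, bfunm d m (x - y)) := by
        rw [integral_const_mul, integral_add hn hm]
    _ = 2 ^ (d + 2) * (∫ y, bfun d y) * bfunm d m x := by
        rw [integral_sub_left_eq_self (bfunm d m) volume x, integral_bfunm, integral_bfunm]
        ring

end bfunm

theorem stmt6_general (d : ℕ) :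
    ∃ C > 0, ∀ n m : ℕ, ∀ x : EuclideanSpace ℝ (Fin d),
      (∫ y, bfunm d n y * bfunm d m (x - y)) ≤ C * bfunm d (min n m) x := by
  refine ⟨2 ^ (d + 2) * ∫ y, bfun d y, mul_pos (by positivity) integral_bfun_pos,
    fun n m x => ?_⟩
  rcases le_total m n with h | h
  · rw [min_eq_right h]
    exact integral_bfunm_mul_bfunm_sub_le h x
  · rw [min_eq_left h, integral_mul_comp_sub_comm]
    exact integral_bfunm_mul_bfunm_sub_le h x

/-- there is `C > 0` (depending only on `d`) with
`(b_n ∗ b_m)(x) ≤ C · b_{min{n,m}}(x)` for all `n, m ≥ 0` and `x ∈ ℝᵈ`. -/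
theorem stmt6 (d : ℕ) (hd : 0 < d) :
    ∃ C > 0, ∀ n m : ℕ, ∀ x : EuclideanSpace ℝ (Fin d),
      (∫ y, bfunm d n y * bfunm d m (x - y)) ≤ C * bfunm d (min n m) x :=
  stmt6_general d
end

section
/- Let Λ be a compact metric space, T : Λ → Λ continuous, and let φ_m : Λ → ℝ be a subadditive sequence of continuous functions (φ_{m+n} ≤ φ_m + φ_n ∘ T^m). For each ergodic T-invariant probability measure μ, let χ(μ) = lim_m (1/m) ∫ φ_m dμ (which exists by subadditivity). Suppose additionally that the entropy map μ ↦ h_μ(T) is upper semicontinuous. Then lim_{m→∞} sup_μ (1/m)(m·h_μ(T) + ∫φ_m dμ) ≤ sup_μ (h_μ(T) + χ(μ)), where suprema are over T-invariant Borel probability measures μ on Λ. -/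
/-!
Averaging the subadditivity of `φ` against an invariant `μ` makes `n ↦ ∫ φ_n dμ` subadditive,
and writing `n = q m + r` with `m ≤ r < 2m` gives
`(1/n) ∫ φ_n dμ ≤ (1/m) ∫ φ_m dμ + O_m(1/n)` uniformly in `μ`, so the limsup is at most
`sup_μ (h μ + (1/m) ∫ φ_m dμ)` for every `m`. Along `m = 2^j` the functions
`μ ↦ h μ + 2^{-j} ∫ φ_{2^j} dμ` are upper semicontinuous and decrease to `h μ + χ μ`; by
compactness of the set of invariant measures a single invariant `μ` has all of them above the
limsup, and letting `j → ∞` bounds the limsup by `h μ + χ μ`.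
-/

open Filter MeasureTheory Topology

section Subadditive

variable {u : ℕ → ℝ} (hu : ∀ m n, 1 ≤ m → 1 ≤ n → u (m + n) ≤ u m + u n)
include hu

lemma le_mul_add_of_subadditive {m : ℕ} (hm : 1 ≤ m) (q : ℕ) {r : ℕ} (hr : 1 ≤ r) :
    u (q * m + r) ≤ q * u m + u r := by
  induction q with
  | zero => simp
  | succ q ih =>
    calc u ((q + 1) * m + r) = u (m + (q * m + r)) := by ring_nf
      _ ≤ u m + u (q * m + r) := hu _ _ hm (hr.trans (Nat.le_add_left _ _))
      _ ≤ u m + (q * u m + u r) := by gcongr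
      _ = ((q + 1 : ℕ) : ℝ) * u m + u r := by push_cast; ring

lemma div_le_div_add_of_subadditive {m n : ℕ} (hm : 1 ≤ m) (hmn : m ≤ n) {C : ℝ}
    (hC : ∀ j, m ≤ j → j < 2 * m → |u j| ≤ C) : u n / n ≤ u m / m + 3 * C / n := by
  obtain ⟨q, r, hmr, hr, rfl⟩ : ∃ q r, m ≤ r ∧ r < 2 * m ∧ n = q * m + r := by
    refine ⟨(n - m) / m, (n - m) % m + m, by omega, by have := Nat.mod_lt (n - m) hm; omega, ?_⟩
    have := Nat.div_add_mod (n - m) m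
    rw [mul_comm] at this
    omega
  have hsplit := le_mul_add_of_subadditive hu hm q (hm.trans hmr)
  have hm0 : (0 : ℝ) < m := by exact_mod_cast hm
  have hn0 : (0 : ℝ) < ((q * m + r : ℕ) : ℝ) := by
    exact_mod_cast (hm.trans (hmr.trans (Nat.le_add_left _ _)) : 0 < q * m + r)
  have hum := abs_le.mp (hC m le_rfl (by omega))
  have hur := abs_le.mp (hC r hmr hr)
  have hmr' : (m : ℝ) ≤ r := by exact_mod_cast hmr
  have hr' : (r : ℝ) ≤ 2 * m := by exact_mod_cast hr.le
  have key : u (q * m + r) * m ≤ u m * ((q * m + r : ℕ) : ℝ) + 3 * C * m := by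
    push_cast
    nlinarith [mul_le_mul_of_nonneg_left hur.2 hm0.le, mul_le_mul_of_nonneg_left hum.1 hm0.le,
      mul_le_mul_of_nonneg_left (neg_le.mp hum.1) (hm0.le.trans hmr'),
      mul_le_mul_of_nonneg_right hr' ((abs_nonneg _).trans (hC m le_rfl (by omega)))]
  rw [div_add_div _ _ hm0.ne' hn0.ne', div_le_div_iff₀ hn0 (by positivity)]
  nlinarith

lemma antitone_div_two_pow_of_subadditive :
    Antitone fun j : ℕ => u (2 ^ j) / ((2 ^ j : ℕ) : ℝ) := by
  refine antitone_nat_of_succ_le fun j => ?_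
  have h2 : u (2 ^ (j + 1)) ≤ 2 * u (2 ^ j) := by
    rw [pow_succ, mul_two]
    linarith [hu (2 ^ j) (2 ^ j) Nat.one_le_two_pow Nat.one_le_two_pow]
  have hcast : ((2 ^ (j + 1) : ℕ) : ℝ) = 2 * ((2 ^ j : ℕ) : ℝ) := by push_cast; ring
  rw [hcast, ← div_div]
  gcongr
  linarith

end Subadditive

lemma limsup_le_of_forall_le_add_div {P : ℕ → ℝ} (hP : IsCoboundedUnder (· ≤ ·) atTop P)
    {m : ℕ} {C : ℝ} (h : ∀ n, m ≤ n → P n ≤ P m + C / n) : limsup P atTop ≤ P m := by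
  have ht : Tendsto (fun n : ℕ => P m + C / n) atTop (𝓝 (P m)) := by
    simpa using tendsto_const_nhds.add (tendsto_const_div_atTop_nhds_zero_nat C)
  calc limsup P atTop ≤ limsup (fun n : ℕ => P m + C / n) atTop :=
        limsup_le_limsup (eventually_atTop.2 ⟨m, h⟩) hP ht.isBoundedUnder_le
    _ = P m := ht.limsup_eq

lemma IsCompact.exists_forall_abs_le_of_continuous {X : Type*} [TopologicalSpace X] {K : Set X}
    (hK : IsCompact K) {u : ℕ → X → ℝ} (hu : ∀ n, Continuous (u n)) (N : ℕ) :
    ∃ C, ∀ x ∈ K, ∀ j < N, |u j x| ≤ C := by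
  obtain ⟨C, hC⟩ := hK.exists_bound_of_continuousOn
    (f := fun x => ∑ j ∈ Finset.range N, |u j x|) (by fun_prop)
  refine ⟨C, fun x hx j hj => ?_⟩
  calc |u j x| ≤ ∑ i ∈ Finset.range N, |u i x| :=
        Finset.single_le_sum (fun i _ => abs_nonneg (u i x)) (Finset.mem_range.2 hj)
    _ ≤ C := (le_abs_self _).trans (hC x hx)

/-- The sets `K ∩ {c ≤ G j}` are closed, nonempty (upper semicontinuous functions attain their
maximum on `K`) and decreasing, so they meet by compactness. -/
theorem IsCompact.exists_forall_le_of_antitone {X : Type*} [TopologicalSpace X] {K : Set X}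
    (hK : IsCompact K) (hne : K.Nonempty) {G : ℕ → X → ℝ} (hG : ∀ j, UpperSemicontinuous (G j))
    (hanti : ∀ x ∈ K, Antitone fun j => G j x) {c : ℝ} (hc : ∀ j, c ≤ sSup (G j '' K)) :
    ∃ x ∈ K, ∀ j, c ≤ G j x := by
  have hmax : ∀ j, ∃ x ∈ K, c ≤ G j x := fun j => by
    obtain ⟨x, hx, hxmax⟩ := ((hG j).upperSemicontinuousOn K).exists_isMaxOn hne hK
    refine ⟨x, hx, (hc j).trans (csSup_le (hne.image _) ?_)⟩
    rintro _ ⟨y, hy, rfl⟩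
    exact hxmax hy
  obtain ⟨x, hxK, hx⟩ := hK.inter_iInter_nonempty (fun j => G j ⁻¹' Set.Ici c)
    (fun j => (hG j).isClosed_preimage c) fun s => by
      obtain ⟨x, hxK, hx⟩ := hmax (s.sup id)
      exact ⟨x, hxK, Set.mem_iInter₂.2 fun j hj =>
        hx.trans (hanti x hxK (Finset.le_sup (f := id) hj))⟩
  exact ⟨x, hxK, Set.mem_iInter.1 hx⟩

theorem limsup_sSup_add_div_le_sSup_add_of_subadditive {X : Type*} [TopologicalSpace X]
    {K : Set X} (hK : IsCompact K) (hne : K.Nonempty) {f : X → ℝ} (hf : UpperSemicontinuous f)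
    {u : ℕ → X → ℝ} (hu : ∀ n, Continuous (u n))
    (hsub : ∀ x ∈ K, ∀ m n, 1 ≤ m → 1 ≤ n → u (m + n) x ≤ u m x + u n x)
    {χ : X → ℝ} (hχ : ∀ x ∈ K, Tendsto (fun n : ℕ => u n x / n) atTop (𝓝 (χ x))) :
    limsup (fun n : ℕ => sSup ((fun x => f x + u n x / n) '' K)) atTop
      ≤ sSup ((fun x => f x + χ x) '' K) := by
  set F : ℕ → X → ℝ := fun n x => f x + u n x / n
  have hF : ∀ n, UpperSemicontinuous (F n) := fun n =>
    hf.add ((hu n).div_const _).upperSemicontinuous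
  have hFbdd : ∀ n, BddAbove (F n '' K) := fun n =>
    ((hF n).upperSemicontinuousOn K).bddAbove_of_isCompact hK
  choose C hC using fun m => hK.exists_forall_abs_le_of_continuous hu (2 * m)
  have hPle : ∀ m n, 1 ≤ m → m ≤ n → sSup (F n '' K) ≤ sSup (F m '' K) + 3 * C m / n := by
    intro m n hm hmn
    refine csSup_le (hne.image _) ?_
    rintro _ ⟨x, hx, rfl⟩
    have := div_le_div_add_of_subadditive (hsub x hx) hm hmn fun j _ hj => hC m x hx j hj
    have := le_csSup (hFbdd m) ⟨x, hx, rfl⟩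
    simp only [F] at *
    linarith
  obtain ⟨x₀, hx₀⟩ := hne
  have hcobdd : IsCoboundedUnder (· ≤ ·) atTop fun n => sSup (F n '' K) := by
    refine IsBoundedUnder.isCoboundedUnder_le
      (isBoundedUnder_of_eventually_ge (a := f x₀ + (χ x₀ - 1)) ?_)
    filter_upwards [(hχ x₀ hx₀).eventually_const_lt (sub_one_lt _)] with n hn
    have := le_csSup (hFbdd n) ⟨x₀, hx₀, rfl⟩
    simp only [F] at this
    linarith
  have hlim : ∀ x ∈ K, Tendsto (fun j : ℕ => F (2 ^ j) x) atTop (𝓝 (f x + χ x)) := fun x hx =>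
    tendsto_const_nhds.add ((hχ x hx).comp (tendsto_pow_atTop_atTop_of_one_lt one_lt_two))
  have hanti : ∀ x ∈ K, Antitone fun j : ℕ => F (2 ^ j) x := fun x hx i j hij => by
    have := antitone_div_two_pow_of_subadditive (u := fun n => u n x) (hsub x hx) hij
    simp only [F] at this ⊢
    linarith
  obtain ⟨x, hx, hxc⟩ := hK.exists_forall_le_of_antitone ⟨x₀, hx₀⟩ (fun j => hF (2 ^ j)) hanti
    fun j => limsup_le_of_forall_le_add_div hcobdd fun n hn => hPle _ n Nat.one_le_two_pow hn
  have hbdd : BddAbove ((fun x => f x + χ x) '' K) := by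
    obtain ⟨B, hB⟩ := hFbdd 1
    refine ⟨B, ?_⟩
    rintro _ ⟨y, hy, rfl⟩
    exact ((hanti y hy).le_of_tendsto (hlim y hy) 0).trans (hB ⟨y, hy, rfl⟩)
  exact (ge_of_tendsto' (hlim x hx) hxc).trans (le_csSup hbdd ⟨x, hx, rfl⟩)

section Invariant

variable {Λ : Type*} [MeasurableSpace Λ] {T : Λ → Λ}

lemma integral_comp_iterate_of_map_eq (hT : Measurable T) {μ : Measure Λ} (hμ : μ.map T = μ)
    (j : ℕ) {g : Λ → ℝ} (hg : AEStronglyMeasurable g μ) :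
    ∫ x, g (T^[j] x) ∂μ = ∫ x, g x ∂μ := by
  have hj : μ.map T^[j] = μ := ((MeasurePreserving.mk hT hμ).iterate j).map_eq
  rw [← integral_map (hT.iterate j).aemeasurable (hj.symm ▸ hg), hj]

variable [TopologicalSpace Λ]

lemma integral_subadditive_of_map_eq [CompactSpace Λ] [BorelSpace Λ]
    (hT : Continuous T) {μ : Measure Λ} [IsFiniteMeasure μ] (hμ : μ.map T = μ)
    {φ : ℕ → Λ → ℝ} (hφc : ∀ m, Continuous (φ m))
    (hsub : ∀ m n, 1 ≤ m → 1 ≤ n → ∀ x, φ (m + n) x ≤ φ m x + φ n (T^[m] x))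
    (m n : ℕ) (hm : 1 ≤ m) (hn : 1 ≤ n) :
    ∫ x, φ (m + n) x ∂μ ≤ ∫ x, φ m x ∂μ + ∫ x, φ n x ∂μ := by
  have hint : ∀ {g : Λ → ℝ}, Continuous g → Integrable g μ := fun hg =>
    hg.integrable_of_hasCompactSupport (HasCompactSupport.of_compactSpace _)
  have hφT : Integrable (fun x => φ n (T^[m] x)) μ := hint ((hφc n).comp (hT.iterate m))
  rw [← integral_comp_iterate_of_map_eq hT.measurable hμ m (hφc n).aestronglyMeasurable,
    ← integral_add (hint (hφc m)) hφT]
  exact integral_mono (hint (hφc _)) ((hint (hφc m)).add hφT) (hsub m n hm hn)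

lemma ProbabilityMeasure.isClosed_setOf_map_eq [HasOuterApproxClosed Λ] [BorelSpace Λ]
    (hT : Continuous T) :
    IsClosed {μ : ProbabilityMeasure Λ | Measure.map T (μ : Measure Λ) = μ} := by
  have hset : {μ : ProbabilityMeasure Λ | Measure.map T (μ : Measure Λ) = μ} =
      {μ | μ.map hT.measurable.aemeasurable = μ} := by
    ext μ
    simp [← ProbabilityMeasure.toMeasure_injective.eq_iff]
  rw [hset]
  exact isClosed_eq (ProbabilityMeasure.continuous_map hT) continuous_id

end Invariant

lemma setOf_exists_and_eq {α β : Type*} (p : α → Prop) (g : α → β) :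
    {b | ∃ a, p a ∧ b = g a} = g '' {a | p a} := by
  ext
  simp [eq_comm]

theorem stmt9_general {Λ : Type*} [MetricSpace Λ] [CompactSpace Λ]
    [MeasurableSpace Λ] [BorelSpace Λ]
    (T : Λ → Λ) (hT : Continuous T)
    (φ : ℕ → Λ → ℝ) (hφc : ∀ m, Continuous (φ m))
    (hsub : ∀ m n, 1 ≤ m → 1 ≤ n → ∀ x, φ (m + n) x ≤ φ m x + φ n (T^[m] x))
    (h : ProbabilityMeasure Λ → ℝ)
    (hsc : UpperSemicontinuous h)
    (hex : ∃ μ : ProbabilityMeasure Λ, Measure.map T (μ : Measure Λ) = (μ : Measure Λ))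
    (χ : ProbabilityMeasure Λ → ℝ)
    (hχ : ∀ μ : ProbabilityMeasure Λ,
      Measure.map T (μ : Measure Λ) = (μ : Measure Λ) →
      Filter.Tendsto (fun m : ℕ => (∫ x, φ m x ∂(μ : Measure Λ)) / m)
        Filter.atTop (nhds (χ μ))) :
    Filter.limsup (fun m : ℕ => sSup {r : ℝ | ∃ μ : ProbabilityMeasure Λ,
        Measure.map T (μ : Measure Λ) = (μ : Measure Λ) ∧
        r = h μ + (∫ x, φ m x ∂(μ : Measure Λ)) / m}) Filter.atTop
      ≤ sSup {r : ℝ | ∃ μ : ProbabilityMeasure Λ,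
        Measure.map T (μ : Measure Λ) = (μ : Measure Λ) ∧ r = h μ + χ μ} := by
  simp only [setOf_exists_and_eq]
  exact limsup_sSup_add_div_le_sSup_add_of_subadditive
    (ProbabilityMeasure.isClosed_setOf_map_eq hT).isCompact hex hsc
    (fun n => ProbabilityMeasure.continuous_integral_continuousMap (⟨φ n, hφc n⟩ : C(Λ, ℝ)))
    (fun μ hμ => integral_subadditive_of_map_eq hT hμ hφc hsub) hχ

/-- with `φ_m` subadditive continuous potentials for a continuous map `T`
on a compact metric space, `χ(μ) = lim_m (1/m)∫φ_m dμ` for invariant `μ`, and the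
entropy map `μ ↦ h_μ(T)` upper semicontinuous,
`lim_m sup_μ (1/m)(m h_μ(T) + ∫ φ_m dμ) ≤ sup_μ (h_μ(T) + χ(μ))`. -/
theorem stmt9 {Λ : Type*} [MetricSpace Λ] [CompactSpace Λ] [Nonempty Λ]
    [MeasurableSpace Λ] [BorelSpace Λ]
    (T : Λ → Λ) (hT : Continuous T)
    (φ : ℕ → Λ → ℝ) (hφc : ∀ m, Continuous (φ m))
    (hsub : ∀ m n, 1 ≤ m → 1 ≤ n → ∀ x, φ (m + n) x ≤ φ m x + φ n (T^[m] x))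
    (h : ProbabilityMeasure Λ → ℝ)
    (hsc : UpperSemicontinuous h) (hhb : BddAbove (Set.range h)) (hh0 : ∀ μ, 0 ≤ h μ)
    (hex : ∃ μ : ProbabilityMeasure Λ, Measure.map T (μ : Measure Λ) = (μ : Measure Λ))
    (χ : ProbabilityMeasure Λ → ℝ)
    (hχ : ∀ μ : ProbabilityMeasure Λ,
      Measure.map T (μ : Measure Λ) = (μ : Measure Λ) →
      Filter.Tendsto (fun m : ℕ => (∫ x, φ m x ∂(μ : Measure Λ)) / m)
        Filter.atTop (nhds (χ μ))) :
    Filter.limsup (fun m : ℕ => sSup {r : ℝ | ∃ μ : ProbabilityMeasure Λ,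
        Measure.map T (μ : Measure Λ) = (μ : Measure Λ) ∧
        r = h μ + (∫ x, φ m x ∂(μ : Measure Λ)) / m}) Filter.atTop
      ≤ sSup {r : ℝ | ∃ μ : ProbabilityMeasure Λ,
        Measure.map T (μ : Measure Λ) = (μ : Measure Λ) ∧ r = h μ + χ μ} :=
  stmt9_general T hT φ hφc hsub h hsc hex χ hχ
end

section
/- Let X be a compact metric space with a finite Borel measure, V ⊆ X compact, and suppose g_n : X → ℝ are continuous with inf_X g_n > 0, g_n ≥ g_{n+1} ≥ |g| for all n, and ‖g_n − |g|‖_{L^∞(V)} → 0, where g : X → ℝ is continuous. Suppose (Q_m(h))_{m≥1} is, for each continuous h ≥ 0, a sequence of positive reals that is submultiplicative in m, monotone in h (h ≤ h' implies Q_m(h) ≤ Q_m(h')), and continuous in h in the sense that for each fixed m, Q_m(g_n) → Q_m(g) as n → ∞. Let Q(h) = lim_m Q_m(h)^{1/m}. Then lim_{n→∞} Q(g_n) = Q(g). -/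
/-!
Submultiplicativity gives `Q(h) ≤ Q_m(h)^{1/m}` for every `m`, and monotonicity in `h` gives
`Q(|g|) ≤ Q(g_n)`. Given `b > Q(|g|)`, fix `m` with `Q_m(|g|)^{1/m} < b`; continuity of `Q_m`
along `g_n` then yields `Q(g_n) ≤ Q_m(g_n)^{1/m} < b` for all large `n`.
-/

open MeasureTheory Filter Topology

section Submultiplicative

variable {a : ℕ → ℝ} (hsub : ∀ m n, 1 ≤ m → 1 ≤ n → a (m + n) ≤ a m * a n)
include hsub

theorem apply_mul_le_pow {m : ℕ} (hm : 1 ≤ m) (ha : 0 ≤ a m) {j : ℕ} (hj : 1 ≤ j) :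
    a (m * j) ≤ a m ^ j := by
  induction j, hj using Nat.le_induction with
  | base => simp
  | succ j hj ih =>
    calc a (m * (j + 1)) = a (m * j + m) := by rw [Nat.mul_succ]
      _ ≤ a (m * j) * a m := hsub _ _ (Nat.one_le_iff_ne_zero.2 (by positivity)) hm
      _ ≤ a m ^ j * a m := mul_le_mul_of_nonneg_right ih ha
      _ = a m ^ (j + 1) := (pow_succ _ _).symm

theorem le_rpow_inv_of_tendsto_rpow_inv (hnonneg : ∀ k, 1 ≤ k → 0 ≤ a k) {L : ℝ}
    (hL : Tendsto (fun k : ℕ => a k ^ ((k : ℝ)⁻¹)) atTop (𝓝 L)) {m : ℕ} (hm : 1 ≤ m) :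
    L ≤ a m ^ ((m : ℝ)⁻¹) := by
  have hmul : Tendsto (fun j : ℕ => m * j) atTop atTop :=
    tendsto_id.const_mul_atTop' (by omega)
  refine le_of_tendsto (hL.comp hmul) ?_
  filter_upwards [eventually_ge_atTop 1] with j hj
  have hmj : 1 ≤ m * j := Nat.one_le_iff_ne_zero.2 (by positivity)
  calc a (m * j) ^ (((m * j : ℕ) : ℝ)⁻¹)
      ≤ (a m ^ j) ^ (((m * j : ℕ) : ℝ)⁻¹) :=
        Real.rpow_le_rpow (hnonneg _ hmj) (apply_mul_le_pow hsub hm (hnonneg m hm) hj)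
          (by positivity)
    _ = a m ^ ((m : ℝ)⁻¹) := by
        rw [← Real.rpow_natCast, ← Real.rpow_mul (hnonneg m hm)]
        congr 1
        have : (j : ℝ) ≠ 0 := by exact_mod_cast (by omega : j ≠ 0)
        push_cast
        field_simp

end Submultiplicative

theorem stmt10_general {X : Type*} [MetricSpace X]
    (g : X → ℝ) (hg : Continuous g)
    (gn : ℕ → X → ℝ) (hgnc : ∀ n, Continuous (gn n))
    (hge : ∀ n x, |g x| ≤ gn n x)
    (Q : ℕ → (X → ℝ) → ℝ)
    (hQpos : ∀ m, 1 ≤ m → ∀ h : X → ℝ, Continuous h → (∀ x, 0 ≤ h x) → 0 < Q m h)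
    (hQsub : ∀ m n, 1 ≤ m → 1 ≤ n → ∀ h : X → ℝ, Q (m + n) h ≤ Q m h * Q n h)
    (hQmono : ∀ m, ∀ h h' : X → ℝ, (∀ x, h x ≤ h' x) → Q m h ≤ Q m h')
    (hQcont : ∀ m, 1 ≤ m →
      Filter.Tendsto (fun n => Q m (gn n)) Filter.atTop (nhds (Q m (fun x => |g x|))))
    (Qg : ℝ) (Qgn : ℕ → ℝ)
    (hQg : Filter.Tendsto (fun m : ℕ => Q m (fun x => |g x|) ^ ((m : ℝ)⁻¹))
      Filter.atTop (nhds Qg))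
    (hQgn : ∀ n, Filter.Tendsto (fun m : ℕ => Q m (gn n) ^ ((m : ℝ)⁻¹))
      Filter.atTop (nhds (Qgn n))) :
    Filter.Tendsto Qgn Filter.atTop (nhds Qg) := by
  have hQg_nonneg : ∀ m, 1 ≤ m → 0 ≤ Q m (fun x => |g x|) :=
    fun m hm => (hQpos m hm _ hg.abs fun x => abs_nonneg _).le
  have hQgn_le : ∀ n m, 1 ≤ m → Qgn n ≤ Q m (gn n) ^ ((m : ℝ)⁻¹) := fun n _ =>
    le_rpow_inv_of_tendsto_rpow_inv (fun k l hk hl => hQsub k l hk hl (gn n))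
      (fun k hk => (hQpos k hk _ (hgnc n) fun x => (abs_nonneg _).trans (hge n x)).le) (hQgn n)
  have hQg_le : ∀ n, Qg ≤ Qgn n := fun n =>
    le_of_tendsto_of_tendsto hQg (hQgn n) <| by
      filter_upwards [eventually_ge_atTop 1] with m hm
      exact Real.rpow_le_rpow (hQg_nonneg m hm) (hQmono m _ _ (hge n)) (by positivity)
  refine tendsto_order.2 ⟨fun b hb => .of_forall fun n => hb.trans_le (hQg_le n), fun b hb => ?_⟩
  obtain ⟨m, hmb, hm⟩ := ((hQg.eventually (gt_mem_nhds hb)).and (eventually_ge_atTop 1)).exists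
  have hcont : Tendsto (fun n => Q m (gn n) ^ ((m : ℝ)⁻¹)) atTop
      (𝓝 (Q m (fun x => |g x|) ^ ((m : ℝ)⁻¹))) :=
    (hQcont m hm).rpow_const (Or.inr (by positivity))
  filter_upwards [hcont.eventually (gt_mem_nhds hmb)] with n hn
  exact (hQgn_le n m hm).trans_lt hn

/-- abstract form of Lemma 3.3: given `g_n ↓ |g|` uniformly on `V` with
`inf g_n > 0`, and a family `Q_m(h)` of positive reals, submultiplicative in `m`, monotone
and continuous in `h`, the limits `Q(h) = lim_m Q_m(h)^{1/m}` satisfy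
`lim_n Q(g_n) = Q(g)`. -/
theorem stmt10 {X : Type*} [MetricSpace X] [CompactSpace X]
    [MeasurableSpace X] [BorelSpace X]
    (ν : Measure X) [IsFiniteMeasure ν]
    (V : Set X) (hV : IsCompact V)
    (g : X → ℝ) (hg : Continuous g)
    (gn : ℕ → X → ℝ) (hgnc : ∀ n, Continuous (gn n))
    (hgnpos : ∀ n, ∃ c > 0, ∀ x, c ≤ gn n x)
    (hmonon : ∀ n x, gn (n + 1) x ≤ gn n x)
    (hge : ∀ n x, |g x| ≤ gn n x)
    (hconv : ∀ ε > 0, ∃ N, ∀ n ≥ N, ∀ x ∈ V, abs (gn n x - |g x|) ≤ ε)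
    (Q : ℕ → (X → ℝ) → ℝ)
    (hQpos : ∀ m, 1 ≤ m → ∀ h : X → ℝ, Continuous h → (∀ x, 0 ≤ h x) → 0 < Q m h)
    (hQsub : ∀ m n, 1 ≤ m → 1 ≤ n → ∀ h : X → ℝ, Q (m + n) h ≤ Q m h * Q n h)
    (hQmono : ∀ m, ∀ h h' : X → ℝ, (∀ x, h x ≤ h' x) → Q m h ≤ Q m h')
    (hQcont : ∀ m, 1 ≤ m →
      Filter.Tendsto (fun n => Q m (gn n)) Filter.atTop (nhds (Q m (fun x => |g x|))))
    (Qg : ℝ) (Qgn : ℕ → ℝ)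
    (hQg : Filter.Tendsto (fun m : ℕ => Q m (fun x => |g x|) ^ ((m : ℝ)⁻¹))
      Filter.atTop (nhds Qg))
    (hQgn : ∀ n, Filter.Tendsto (fun m : ℕ => Q m (gn n) ^ ((m : ℝ)⁻¹))
      Filter.atTop (nhds (Qgn n))) :
    Filter.Tendsto Qgn Filter.atTop (nhds Qg) :=
  stmt10_general g hg gn hgnc hge Q hQpos hQsub hQmono hQcont Qg Qgn hQg hQgn
end

section
/- Let χ̂_n ∈ 𝓢(ℝᵈ) be an approximate identity family: χ̂_n(x) = 2^{dn} χ̂(2^n x) where χ̂ ∈ 𝓢(ℝᵈ) with ∫ χ̂ = 1. Let 𝓣 : ℝᵈ → ℝᵈ be a C¹ diffeomorphism, G ∈ C⁰_0(ℝᵈ), and suppose x₀ is the unique fixed point of 𝓣 in supp(G) and that Id − D𝓣(x₀) is invertible. Then lim_{n→∞} ∫ χ̂_n(𝓣(x) − x) G(x) dx = G(x₀)/|det(Id − D𝓣(x₀))|. -/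
/-!
Near `x₀` the map `F = 𝓣 - id` is a local diffeomorphism with `F x₀ = 0`, so on a small ball
`U ∋ x₀` the substitution `z = F x` turns `∫_U c^d χ(c F x) G x dx` into `∫ c^d χ(c z) H z dz`,
where `H = (G / |det DF|) ∘ F⁻¹` on `F '' U` and `0` elsewhere is bounded and continuous at `0`.
Rescaling `z = y / c` and dominated convergence give the limit `(∫ χ) H 0`. On the compact set
`supp G \ U` the map `F` does not vanish, so `|F|` is bounded below there and the decay
`|χ y| ≤ C |y|^{-(d+1)}` of the Schwartz function makes that part of the integral `O(1/c)`.
-/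

open MeasureTheory Filter Topology Set Module

theorem IsCompact.exists_pos_forall_le_norm {X E : Type*} [TopologicalSpace X]
    [NormedAddCommGroup E] {K : Set X} (hK : IsCompact K) {f : X → E} (hf : ContinuousOn f K)
    (hf0 : ∀ x ∈ K, f x ≠ 0) : ∃ ε > 0, ∀ x ∈ K, ε ≤ ‖f x‖ := by
  rcases K.eq_empty_or_nonempty with rfl | hne
  · exact ⟨1, one_pos, by simp⟩
  obtain ⟨x₁, hx₁, hmin⟩ := hK.exists_isMinOn hne hf.norm
  exact ⟨‖f x₁‖, norm_pos_iff.2 (hf0 x₁ hx₁), fun x hx => hmin hx⟩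

theorem ContinuousLinearMap.abs_det_neg {M : Type*} [TopologicalSpace M] [AddCommGroup M]
    [IsTopologicalAddGroup M] [Module ℝ M] (f : M →L[ℝ] M) : |(-f).det| = |f.det| := by
  rw [ContinuousLinearMap.det, ContinuousLinearMap.toLinearMap_neg,
    ← neg_one_smul ℝ (f : M →ₗ[ℝ] M), LinearMap.det_smul, abs_mul, abs_pow, abs_neg, abs_one,
    one_pow, one_mul]

theorem SchwartzMap.pow_mul_norm_comp_smul_le {E F : Type*} [NormedAddCommGroup E]
    [NormedSpace ℝ E] [NormedAddCommGroup F] [NormedSpace ℝ F] (χ : SchwartzMap E F) (k : ℕ)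
    {ε c : ℝ} (hε : 0 < ε) (hc : 0 < c) {v : E} (hv : ε ≤ ‖v‖) :
    c ^ k * ‖χ (c • v)‖ ≤ SchwartzMap.seminorm ℝ (k + 1) 0 χ / ε ^ (k + 1) / c := by
  have hcv : c * ε ≤ ‖c • v‖ := by
    rw [norm_smul, Real.norm_of_nonneg hc.le]
    exact mul_le_mul_of_nonneg_left hv hc.le
  have key : (c * ε) ^ (k + 1) * ‖χ (c • v)‖ ≤ SchwartzMap.seminorm ℝ (k + 1) 0 χ :=
    (mul_le_mul_of_nonneg_right (pow_le_pow_left₀ (by positivity) hcv _) (norm_nonneg _)).trans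
      (χ.norm_pow_mul_le_seminorm ℝ (k + 1) (c • v))
  rw [div_div, le_div_iff₀ (by positivity)]
  calc c ^ k * ‖χ (c • v)‖ * (ε ^ (k + 1) * c) = (c * ε) ^ (k + 1) * ‖χ (c • v)‖ := by ring
    _ ≤ _ := key

theorem tendsto_setIntegral_pow_mul_comp_smul_mul_of_le_norm {X E : Type*} [MeasurableSpace X]
    {μ : Measure X} [NormedAddCommGroup E] [NormedSpace ℝ E] (χ : SchwartzMap E ℝ) (k : ℕ)
    {F : X → E} {G : X → ℝ} {s : Set X} (hs : μ s < ⊤) {ε C : ℝ} (hε : 0 < ε)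
    (hF : ∀ x ∈ s, ε ≤ ‖F x‖) (hG : ∀ x ∈ s, ‖G x‖ ≤ C) :
    Tendsto (fun c : ℝ => ∫ x in s, c ^ k * χ (c • F x) * G x ∂μ) atTop (𝓝 0) := by
  set S := SchwartzMap.seminorm ℝ (k + 1) 0 χ / ε ^ (k + 1)
  have hbound : ∀ᶠ c : ℝ in atTop,
      ‖∫ x in s, c ^ k * χ (c • F x) * G x ∂μ‖ ≤ S * C * μ.real s * c⁻¹ := by
    filter_upwards [eventually_gt_atTop 0] with c hc
    calc _ ≤ S / c * C * μ.real s := by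
          refine norm_setIntegral_le_of_norm_le_const hs fun x hx => ?_
          rw [norm_mul, norm_mul, Real.norm_of_nonneg (by positivity)]
          exact mul_le_mul (χ.pow_mul_norm_comp_smul_le k hε hc (hF x hx)) (hG x hx)
            (norm_nonneg _) (by positivity)
      _ = S * C * μ.real s * c⁻¹ := by ring
  refine squeeze_zero_norm' hbound ?_
  simpa using tendsto_inv_atTop_zero.const_mul (S * C * μ.real s)

theorem tendsto_setIntegral_compl_pow_mul_comp_smul_mul {X E : Type*} [TopologicalSpace X]
    [MeasurableSpace X] [OpensMeasurableSpace X] {μ : Measure X} [IsFiniteMeasureOnCompacts μ]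
    [NormedAddCommGroup E] [NormedSpace ℝ E] (χ : SchwartzMap E ℝ) (k : ℕ) {F : X → E}
    (hF : Continuous F) {G : X → ℝ} (hG : Continuous G) (hGsupp : HasCompactSupport G)
    {U : Set X} (hU : IsOpen U) (hFU : ∀ x ∈ tsupport G, F x = 0 → x ∈ U) :
    Tendsto (fun c : ℝ => ∫ x in Uᶜ, c ^ k * χ (c • F x) * G x ∂μ) atTop (𝓝 0) := by
  have hK : IsCompact (tsupport G \ U) := hGsupp.diff hU
  obtain ⟨ε, hε, hεF⟩ := hK.exists_pos_forall_le_norm hF.continuousOn fun x hx hx0 =>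
    hx.2 (hFU x hx.1 hx0)
  obtain ⟨C, hC⟩ := hGsupp.exists_bound_of_continuous hG
  have hrw : ∀ c : ℝ, ∫ x in Uᶜ, c ^ k * χ (c • F x) * G x ∂μ
      = ∫ x in tsupport G \ U, c ^ k * χ (c • F x) * G x ∂μ := fun c =>
    setIntegral_eq_of_subset_of_forall_sdiff_eq_zero hU.isClosed_compl.measurableSet
      (fun x hx => hx.2) fun x hx => by
        rw [image_eq_zero_of_notMem_tsupport fun h => hx.2 ⟨h, hx.1⟩, mul_zero]
  simp_rw [hrw]
  exact tendsto_setIntegral_pow_mul_comp_smul_mul_of_le_norm χ k hK.measure_lt_top hε hεF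
    fun x _ => hC x

section

variable {E : Type*} [NormedAddCommGroup E] [NormedSpace ℝ E]

noncomputable def pushforwardDensity (e : OpenPartialHomeomorph E E) (A : E → E →L[ℝ] E)
    (G : E → ℝ) (U : Set E) : E → ℝ :=
  (e '' U).indicator fun z => G (e.symm z) / |(A (e.symm z)).det|

namespace pushforwardDensity

variable {e : OpenPartialHomeomorph E E} {A : E → E →L[ℝ] E} {G : E → ℝ} {U : Set E}

theorem apply_image (hUs : U ⊆ e.source) {x : E} (hx : x ∈ U) :
    pushforwardDensity e A G U (e x) = G x / |(A x).det| := by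
  rw [pushforwardDensity, indicator_of_mem (mem_image_of_mem e hx), e.left_inv (hUs hx)]

theorem continuousAt_image (hU : IsOpen U) (hUs : U ⊆ e.source) (hA : ContinuousOn A U)
    (hG : ContinuousOn G U) {x : E} (hx : x ∈ U) (hdet : (A x).det ≠ 0) :
    ContinuousAt (pushforwardDensity e A G U) (e x) := by
  have hsymm : ContinuousAt e.symm (e x) := e.continuousAt_symm (e.map_source (hUs hx))
  have hx' : e.symm (e x) = x := e.left_inv (hUs hx)
  have hGx : ContinuousAt G (e.symm (e x)) := by
    rw [hx']; exact hG.continuousAt (hU.mem_nhds hx)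
  have hAx : ContinuousAt A (e.symm (e x)) := by
    rw [hx']; exact hA.continuousAt (hU.mem_nhds hx)
  have hraw : ContinuousAt (fun z => G (e.symm z) / |(A (e.symm z)).det|) (e x) :=
    (hGx.comp hsymm).div ((ContinuousLinearMap.continuous_det.continuousAt.comp hAx).abs.comp hsymm)
      (by simpa [hx'] using hdet)
  refine hraw.congr ?_
  filter_upwards [(e.isOpen_image_of_subset_source hU hUs).mem_nhds (mem_image_of_mem e hx)]
    with z hz
  rw [pushforwardDensity, indicator_of_mem hz]

theorem exists_norm_le {K : Set E} (hK : IsCompact K) (hUK : U ⊆ K) (hUs : U ⊆ e.source)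
    (hA : ContinuousOn A K) (hG : ContinuousOn G K) (hdet : ∀ x ∈ K, (A x).det ≠ 0) :
    ∃ C, ∀ z, ‖pushforwardDensity e A G U z‖ ≤ C := by
  obtain ⟨C, hC⟩ := hK.exists_bound_of_continuousOn <|
    hG.div (ContinuousLinearMap.continuous_det.comp_continuousOn hA).abs
      fun x hx => abs_ne_zero.2 (hdet x hx)
  refine ⟨max C 0, fun z => ?_⟩
  by_cases hz : z ∈ e '' U
  · obtain ⟨x, hx, rfl⟩ := hz
    rw [apply_image hUs hx]
    exact (hC x (hUK hx)).trans (le_max_left _ _)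
  · simp [pushforwardDensity, indicator_of_notMem hz]

theorem aestronglyMeasurable [MeasurableSpace E] [OpensMeasurableSpace E] (μ : Measure E)
    (hU : IsOpen U) (hUs : U ⊆ e.source) (hA : ContinuousOn A U)
    (hG : ContinuousOn G U) (hdet : ∀ x ∈ U, (A x).det ≠ 0) :
    AEStronglyMeasurable (pushforwardDensity e A G U) μ := by
  have hV : IsOpen (e '' U) := e.isOpen_image_of_subset_source hU hUs
  have hcont : ContinuousOn (pushforwardDensity e A G U) (e '' U) := by
    rintro _ ⟨x, hx, rfl⟩
    exact (continuousAt_image hU hUs hA hG hx (hdet x hx)).continuousWithinAt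
  have hsupp : (e '' U).indicator (pushforwardDensity e A G U) = pushforwardDensity e A G U :=
    indicator_eq_self.2 support_indicator_subset
  rw [← hsupp, aestronglyMeasurable_indicator_iff hV.measurableSet]
  exact hcont.aestronglyMeasurable hV.measurableSet

variable [FiniteDimensional ℝ E] [MeasurableSpace E] [BorelSpace E] (μ : Measure E)
  [μ.IsAddHaarMeasure]

theorem setIntegral_comp_mul (hU : MeasurableSet U) (hUs : U ⊆ e.source)
    (hA : ∀ x ∈ U, HasFDerivAt e (A x) x) (hdet : ∀ x ∈ U, (A x).det ≠ 0) (φ : E → ℝ) :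
    ∫ x in U, φ (e x) * G x ∂μ = ∫ z, φ z * pushforwardDensity e A G U z ∂μ := by
  have hzero : ∀ z ∉ e '' U, φ z * pushforwardDensity e A G U z = 0 := fun z hz => by
    simp only [pushforwardDensity, indicator_of_notMem hz, mul_zero]
  rw [← setIntegral_eq_integral_of_forall_compl_eq_zero hzero,
    integral_image_eq_integral_abs_det_fderiv_smul μ hU
      (fun x hx => (hA x hx).hasFDerivWithinAt) (e.injOn.mono hUs)]
  refine setIntegral_congr_fun hU fun x hx => ?_
  rw [apply_image hUs hx, smul_eq_mul]
  field_simp [abs_ne_zero.2 (hdet x hx)]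

end pushforwardDensity

variable [FiniteDimensional ℝ E] [MeasurableSpace E] [BorelSpace E] (μ : Measure E)
  [μ.IsAddHaarMeasure]

theorem integral_pow_mul_comp_smul_mul (χ H : E → ℝ) {c : ℝ} (hc : 0 < c) :
    ∫ z, c ^ finrank ℝ E * χ (c • z) * H z ∂μ = ∫ y, χ y * H (c⁻¹ • y) ∂μ := by
  have hsub := μ.integral_comp_smul (fun y => χ y * H (c⁻¹ • y)) c
  simp only [smul_smul, inv_mul_cancel₀ hc.ne', one_smul, smul_eq_mul] at hsub
  simp_rw [mul_assoc, integral_const_mul, hsub, abs_of_pos (inv_pos.2 (pow_pos hc _)),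
    mul_inv_cancel_left₀ (pow_pos hc _).ne']

theorem tendsto_integral_pow_mul_comp_smul_mul {χ H : E → ℝ} (hχ : Integrable χ μ)
    (hHm : AEStronglyMeasurable H μ) {C : ℝ} (hHC : ∀ z, ‖H z‖ ≤ C) (hH0 : ContinuousAt H 0) :
    Tendsto (fun c : ℝ => ∫ z, c ^ finrank ℝ E * χ (c • z) * H z ∂μ) atTop
      (𝓝 ((∫ y, χ y ∂μ) * H 0)) := by
  have hrescale : (fun c : ℝ => ∫ y, χ y * H (c⁻¹ • y) ∂μ)
      =ᶠ[atTop] fun c => ∫ z, c ^ finrank ℝ E * χ (c • z) * H z ∂μ := by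
    filter_upwards [eventually_gt_atTop 0] with c hc
    exact (integral_pow_mul_comp_smul_mul μ χ H hc).symm
  refine Tendsto.congr' hrescale ?_
  rw [← integral_mul_const]
  refine tendsto_integral_filter_of_dominated_convergence (fun y => ‖χ y‖ * C) ?_ ?_
    (hχ.norm.mul_const C) ?_
  · filter_upwards [eventually_gt_atTop 0] with c hc
    exact hχ.aestronglyMeasurable.mul
      (hHm.comp_quasiMeasurePreserving (Measure.quasiMeasurePreserving_smul μ (inv_ne_zero hc.ne')))
  · refine .of_forall fun c => .of_forall fun y => ?_
    rw [norm_mul]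
    exact mul_le_mul_of_nonneg_left (hHC _) (norm_nonneg _)
  · refine .of_forall fun y => (hH0.tendsto.comp ?_).const_mul (χ y)
    simpa using (tendsto_inv_atTop_zero (𝕜 := ℝ)).smul_const y

theorem tendsto_setIntegral_pow_mul_comp_smul_mul_of_openPartialHomeomorph {χ : E → ℝ}
    (hχ : Integrable χ μ) {e : OpenPartialHomeomorph E E} {A : E → E →L[ℝ] E} {G : E → ℝ}
    {U K : Set E} (hU : IsOpen U) (hK : IsCompact K) (hUK : U ⊆ K) (hKs : K ⊆ e.source)
    (he : ∀ x ∈ U, HasFDerivAt e (A x) x) (hA : ContinuousOn A K) (hG : ContinuousOn G K)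
    (hdet : ∀ x ∈ K, (A x).det ≠ 0) {x₀ : E} (hx₀U : x₀ ∈ U) (hx₀ : e x₀ = 0) :
    Tendsto (fun c : ℝ => ∫ x in U, c ^ finrank ℝ E * χ (c • e x) * G x ∂μ) atTop
      (𝓝 ((∫ y, χ y ∂μ) * (G x₀ / |(A x₀).det|))) := by
  have hUs : U ⊆ e.source := hUK.trans hKs
  have hUdet : ∀ x ∈ U, (A x).det ≠ 0 := fun x hx => hdet x (hUK hx)
  set H := pushforwardDensity e A G U
  have hrw : ∀ c : ℝ, ∫ x in U, c ^ finrank ℝ E * χ (c • e x) * G x ∂μ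
      = ∫ z, c ^ finrank ℝ E * χ (c • z) * H z ∂μ := fun c =>
    pushforwardDensity.setIntegral_comp_mul μ hU.measurableSet hUs he hUdet
      fun z => c ^ finrank ℝ E * χ (c • z)
  have hH0 : H 0 = G x₀ / |(A x₀).det| := hx₀ ▸ pushforwardDensity.apply_image hUs hx₀U
  obtain ⟨C, hC⟩ := pushforwardDensity.exists_norm_le hK hUK hUs hA hG hdet
  simp_rw [hrw, ← hH0]
  refine tendsto_integral_pow_mul_comp_smul_mul μ hχ (pushforwardDensity.aestronglyMeasurable μ
    hU hUs (hA.mono hUK) (hG.mono hUK) hUdet) hC ?_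
  exact hx₀ ▸ pushforwardDensity.continuousAt_image hU hUs (hA.mono hUK) (hG.mono hUK) hx₀U
    (hUdet x₀ hx₀U)

theorem tendsto_integral_pow_mul_comp_smul_mul_of_isolated_zero (χ : SchwartzMap E ℝ)
    {F : E → E} {A : E → E →L[ℝ] E} (hF : ∀ x, HasFDerivAt F (A x) x) (hA : Continuous A)
    {G : E → ℝ} (hG : Continuous G) (hGsupp : HasCompactSupport G) {x₀ : E} (hx₀ : F x₀ = 0)
    (huniq : ∀ x ∈ tsupport G, F x = 0 → x = x₀) (hdet : (A x₀).det ≠ 0) :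
    Tendsto (fun c : ℝ => ∫ x, c ^ finrank ℝ E * χ (c • F x) * G x ∂μ) atTop
      (𝓝 ((∫ y, χ y ∂μ) * (G x₀ / |(A x₀).det|))) := by
  obtain ⟨e, hx₀e, rfl⟩ : ∃ e : OpenPartialHomeomorph E E, x₀ ∈ e.source ∧ ⇑e = F := by
    have hstrict : HasStrictFDerivAt F
        ((A x₀).toContinuousLinearEquivOfDetNeZero hdet : E →L[ℝ] E) x₀ := by
      simpa using hasStrictFDerivAt_of_hasFDerivAt_of_continuousAt (.of_forall hF) hA.continuousAt
    exact ⟨_, hstrict.mem_toOpenPartialHomeomorph_source, hstrict.toOpenPartialHomeomorph_coe⟩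
  obtain ⟨r, hr, hball⟩ : ∃ r > 0, Metric.closedBall x₀ r ⊆ e.source ∩ {x | (A x).det ≠ 0} :=
    Metric.nhds_basis_closedBall.mem_iff.1 <| (e.open_source.inter
      (isOpen_ne.preimage (ContinuousLinearMap.continuous_det.comp hA))).mem_nhds ⟨hx₀e, hdet⟩
  have he : Continuous e := continuous_iff_continuousAt.2 fun x => (hF x).continuousAt
  have hinner := tendsto_setIntegral_pow_mul_comp_smul_mul_of_openPartialHomeomorph μ
    χ.integrable Metric.isOpen_ball (isCompact_closedBall x₀ r) Metric.ball_subset_closedBall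
    (fun x hx => (hball hx).1) (fun x _ => hF x) hA.continuousOn hG.continuousOn
    (fun x hx => (hball hx).2) (Metric.mem_ball_self hr) hx₀
  have houter := tendsto_setIntegral_compl_pow_mul_comp_smul_mul (μ := μ) χ (finrank ℝ E) he hG
    hGsupp Metric.isOpen_ball fun x hx hx0 => by
      rw [huniq x hx hx0]; exact Metric.mem_ball_self hr
  have hint : ∀ c : ℝ, Integrable (fun x => c ^ finrank ℝ E * χ (c • e x) * G x) μ := fun c =>
    ((continuous_const.mul (χ.continuous.comp (he.const_smul c))).mul
      hG).integrable_of_hasCompactSupport hGsupp.mul_left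
  simpa only [add_zero] using (hinner.add houter).congr fun c =>
    integral_add_compl Metric.isOpen_ball.measurableSet (hint c)

end

theorem stmt17_general {d : ℕ}
    (χhat : SchwartzMap (EuclideanSpace ℝ (Fin d)) ℝ)
    (hχ : ∫ x, χhat x = 1)
    (𝓣 : EuclideanSpace ℝ (Fin d) → EuclideanSpace ℝ (Fin d))
    (D𝓣 : EuclideanSpace ℝ (Fin d) →
      (EuclideanSpace ℝ (Fin d) →L[ℝ] EuclideanSpace ℝ (Fin d)))
    (hD : ∀ x, HasFDerivAt 𝓣 (D𝓣 x) x) (hDc : Continuous D𝓣)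
    (G : EuclideanSpace ℝ (Fin d) → ℝ) (hG : Continuous G)
    (hGsupp : HasCompactSupport G)
    (x₀ : EuclideanSpace ℝ (Fin d)) (hfix : 𝓣 x₀ = x₀)
    (huniq : ∀ x ∈ tsupport G, 𝓣 x = x → x = x₀)
    (hinv : ((1 : EuclideanSpace ℝ (Fin d) →L[ℝ] EuclideanSpace ℝ (Fin d))
        - D𝓣 x₀).det ≠ 0) :
    Filter.Tendsto
      (fun n : ℕ => ∫ x, (2 : ℝ) ^ (d * n) * χhat ((2 : ℝ) ^ n • (𝓣 x - x)) * G x)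
      Filter.atTop
      (nhds (G x₀ /
        |((1 : EuclideanSpace ℝ (Fin d) →L[ℝ] EuclideanSpace ℝ (Fin d))
          - D𝓣 x₀).det|)) := by
  have habs : |(D𝓣 x₀ - 1).det| = |(1 - D𝓣 x₀).det| := by
    rw [← neg_sub, ContinuousLinearMap.abs_det_neg]
  have hlim := tendsto_integral_pow_mul_comp_smul_mul_of_isolated_zero volume χhat
    (F := fun x => 𝓣 x - x) (A := fun x => D𝓣 x - 1) (fun x => (hD x).sub (hasFDerivAt_id x))
    (hDc.sub continuous_const) hG hGsupp (sub_eq_zero.2 hfix) (fun x hx h => huniq x hx (sub_eq_zero.1 h))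
    (abs_ne_zero.1 (habs ▸ abs_ne_zero.2 hinv))
  rw [hχ, one_mul, habs, finrank_euclideanSpace_fin] at hlim
  refine (hlim.comp (tendsto_pow_atTop_atTop_of_one_lt one_lt_two)).congr fun n => ?_
  simp [← pow_mul, mul_comm]

/-- for a Schwartz approximate identity `χ̂_n(x) = 2^{dn} χ̂(2^n x)` with
`∫ χ̂ = 1`, a `C¹` diffeomorphism `𝓣` with unique fixed point `x₀` of `𝓣` in `supp G`
and `Id − D𝓣(x₀)` invertible,
`lim_n ∫ χ̂_n(𝓣(x) − x) G(x) dx = G(x₀)/|det(Id − D𝓣(x₀))|`. -/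
theorem stmt17 {d : ℕ} (hd : 0 < d)
    (χhat : SchwartzMap (EuclideanSpace ℝ (Fin d)) ℝ)
    (hχ : ∫ x, χhat x = 1)
    (𝓣 : EuclideanSpace ℝ (Fin d) → EuclideanSpace ℝ (Fin d))
    (D𝓣 : EuclideanSpace ℝ (Fin d) →
      (EuclideanSpace ℝ (Fin d) →L[ℝ] EuclideanSpace ℝ (Fin d)))
    (hD : ∀ x, HasFDerivAt 𝓣 (D𝓣 x) x) (hDc : Continuous D𝓣)
    (hbij : Function.Bijective 𝓣)
    (G : EuclideanSpace ℝ (Fin d) → ℝ) (hG : Continuous G)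
    (hGsupp : HasCompactSupport G)
    (x₀ : EuclideanSpace ℝ (Fin d)) (hx₀ : x₀ ∈ tsupport G) (hfix : 𝓣 x₀ = x₀)
    (huniq : ∀ x ∈ tsupport G, 𝓣 x = x → x = x₀)
    (hinv : ((1 : EuclideanSpace ℝ (Fin d) →L[ℝ] EuclideanSpace ℝ (Fin d))
        - D𝓣 x₀).det ≠ 0) :
    Filter.Tendsto
      (fun n : ℕ => ∫ x, (2 : ℝ) ^ (d * n) * χhat ((2 : ℝ) ^ n • (𝓣 x - x)) * G x)
      Filter.atTop
      (nhds (G x₀ /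
        |((1 : EuclideanSpace ℝ (Fin d) →L[ℝ] EuclideanSpace ℝ (Fin d))
          - D𝓣 x₀).det|)) :=
  stmt17_general χhat hχ 𝓣 D𝓣 hD hDc G hG hGsupp x₀ hfix huniq hinv
end

section
/- Let J ⊆ {1,…,k} and let n(1),…,n(k) ∈ ℤ₊ with n(k+1) := n(1), and σ(1),…,σ(k) ∈ {+,−} with σ(k+1) := σ(1). Let c(+) = p > 0 and c(−) = q < 0, and let r > 1 satisfy p − q < r − 1. Suppose that for i ∉ J, c(σ(i+1))·n(i+1) − c(σ(i))·n(i) ≤ δ_i for given reals δ_i. Then −Σ_{i∈J} (r−1)·max{n(i+1), n(i)} ≤ Σ_{i∉J} (c(σ(i+1))n(i+1) − c(σ(i))n(i)) + (r−p+q−1)·max_{1≤i≤k} n(i), using that Σ_{i=1}^k (c(σ(i+1))n(i+1) − c(σ(i))n(i)) = 0 (telescoping around the cycle) and that for each i, |c(σ(i+1))n(i+1) − c(σ(i))n(i)| ≤ (p−q)·max{n(i+1), n(i)}. -/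
open Finset

lemma ite_mul_sub_ite_mul_le {p q : ℝ} (hp : 0 ≤ p) (hq : q ≤ 0) (s t : Bool)
    {x y M : ℝ} (hx : 0 ≤ x) (hxM : x ≤ M) (hy : 0 ≤ y) (hyM : y ≤ M) :
    (if s then p else q) * x - (if t then p else q) * y ≤ (p - q) * M := by
  have hupper : (if s then p else q) * x ≤ p * M := by
    cases s
    · exact (mul_nonpos_of_nonpos_of_nonneg hq hx).trans (mul_nonneg hp (hx.trans hxM))
    · exact mul_le_mul_of_nonneg_left hxM hp
  have hlower : q * M ≤ (if t then p else q) * y := by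
    cases t
    · exact mul_le_mul_of_nonpos_left hyM hq
    · exact (mul_nonpos_of_nonpos_of_nonneg hq (hy.trans hyM)).trans (mul_nonneg hp hy)
  linarith

theorem stmt18_general (k : ℕ)
    (n : ℕ → ℕ) (σ : ℕ → Bool)
    (hcycn : n (k + 1) = n 1) (hcycσ : σ (k + 1) = σ 1)
    (p q r : ℝ) (hp : 0 < p) (hq : q < 0) (hpqr : p - q < r - 1)
    (J : Finset ℕ) (hJ : J ⊆ Finset.Icc 1 k) :
    -(∑ i ∈ J, (r - 1) * ((max (n (i + 1)) (n i) : ℕ) : ℝ))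
      ≤ (∑ i ∈ Finset.Icc 1 k \ J,
          ((if σ (i + 1) then p else q) * (n (i + 1) : ℝ)
            - (if σ i then p else q) * (n i : ℝ)))
        + (r - p + q - 1) * (((Finset.Icc 1 k).sup n : ℕ) : ℝ) := by
  set g : ℕ → ℝ := fun i => (if σ i then p else q) * (n i : ℝ)
  have hcycle : ∑ i ∈ Icc 1 k, (g (i + 1) - g i) = 0 := by
    rw [← Ico_add_one_right_eq_Icc, sum_Ico_sub g (Nat.le_add_left 1 k)]
    simp only [g, hcycn, hcycσ, sub_self]
  have hcomplement : ∑ i ∈ Icc 1 k \ J, (g (i + 1) - g i) = -∑ i ∈ J, (g (i + 1) - g i) := by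
    linarith [sum_sdiff (f := fun i => g (i + 1) - g i) hJ]
  have hstep : ∀ i ∈ J, g (i + 1) - g i ≤ (r - 1) * ((max (n (i + 1)) (n i) : ℕ) : ℝ) := by
    intro i _
    push_cast
    refine (ite_mul_sub_ite_mul_le hp.le hq.le _ _ (Nat.cast_nonneg _) (le_max_left _ _)
      (Nat.cast_nonneg _) (le_max_right _ _)).trans ?_
    exact mul_le_mul_of_nonneg_right hpqr.le (le_max_of_le_left (Nat.cast_nonneg _))
  have hslack : 0 ≤ (r - p + q - 1) * (((Icc 1 k).sup n : ℕ) : ℝ) :=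
    mul_nonneg (by linarith) (Nat.cast_nonneg _)
  change _ ≤ ∑ i ∈ Icc 1 k \ J, (g (i + 1) - g i) + _
  linarith [sum_le_sum hstep]

/-- combinatorial estimate (eqn:cn2): for a cyclic sequence of frequency
indices `n(i)` with polarizations `σ(i)`, `c(+) = p > 0`, `c(−) = q < 0`, `p − q < r − 1`,
and `J ⊆ {1,…,k}`,
`−Σ_{i∈J} (r−1) max{n(i+1), n(i)} ≤ Σ_{i∉J} (c(σ(i+1))n(i+1) − c(σ(i))n(i))
+ (r−p+q−1) max_{1≤i≤k} n(i)`. -/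
theorem stmt18 (k : ℕ) (hk : 1 ≤ k)
    (n : ℕ → ℕ) (σ : ℕ → Bool)
    (hcycn : n (k + 1) = n 1) (hcycσ : σ (k + 1) = σ 1)
    (p q r : ℝ) (hp : 0 < p) (hq : q < 0) (hpqr : p - q < r - 1)
    (J : Finset ℕ) (hJ : J ⊆ Finset.Icc 1 k)
    (δ : ℕ → ℝ)
    (hδ : ∀ i ∈ Finset.Icc 1 k \ J,
      (if σ (i + 1) then p else q) * (n (i + 1) : ℝ)
        - (if σ i then p else q) * (n i : ℝ) ≤ δ i) :
    -(∑ i ∈ J, (r - 1) * ((max (n (i + 1)) (n i) : ℕ) : ℝ))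
      ≤ (∑ i ∈ Finset.Icc 1 k \ J,
          ((if σ (i + 1) then p else q) * (n (i + 1) : ℝ)
            - (if σ i then p else q) * (n i : ℝ)))
        + (r - p + q - 1) * (((Finset.Icc 1 k).sup n : ℕ) : ℝ) :=
  stmt18_general k n σ hcycn hcycσ p q r hp hq hpqr J hJ
end
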